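/- arXiv:2504.00960 — 7 statements merged into one kernel-verified Lean document; each statement's English description precedes it below -/
import Mathlib

section
/- Let G₁ and G₂ be countable infinite groups, Σ a finite set, and φ : G₁ → G₂ a surjective group homomorphism, and let φ* : Σ^{G₂} → Σ^{G₁} be given by φ*(x) = x ∘ φ. If X ⊆ Σ^{G₂} is a minimal subshift, then φ*(X) ⊆ Σ^{G₁} is a minimal subshift. -/
open Set Topology

/-- The left shift action of `G` on `G → A`: `(shift g x) h = x (g⁻¹ * h)`. -/
def shift {G : Type*} [Group G] {A : Type*} (g : G) (x : G → A) : G → A :=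
  fun h => x (g⁻¹ * h)

/-- A subshift: a closed shift-invariant subset of `A^G`. -/
def IsSubshift {G : Type*} [Group G] {A : Type*} [TopologicalSpace A]
    (X : Set (G → A)) : Prop :=
  IsClosed X ∧ ∀ (g : G), ∀ x ∈ X, shift g x ∈ X

/-- A minimal subshift: every orbit is dense in `X`. -/
def IsMinimalSubshift {G : Type*} [Group G] {A : Type*} [TopologicalSpace A]
    (X : Set (G → A)) : Prop :=
  X.Nonempty ∧ IsSubshift X ∧ ∀ x ∈ X, X ⊆ closure {y | ∃ g : G, y = shift g x}

/-- If `φ : G₁ → G₂` is a surjective group homomorphism and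
`X ⊆ A^{G₂}` is a minimal subshift, then `φ*(X) ⊆ A^{G₁}` is a minimal subshift,
where `φ*(x) = x ∘ φ`. -/
theorem starMap_image_of_minimal_subshift
    {G₁ G₂ : Type*} [Group G₁] [Group G₂] [Countable G₁] [Countable G₂]
    [Infinite G₁] [Infinite G₂]
    {A : Type*} [Finite A] [TopologicalSpace A] [DiscreteTopology A]
    (φ : G₁ →* G₂) (hφ : Function.Surjective φ)
    (X : Set (G₂ → A)) (hX : IsMinimalSubshift X) :
    IsMinimalSubshift ((fun x : G₂ → A => x ∘ φ) '' X) := by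

  classical
  obtain ⟨hne, ⟨hclosed, hinv⟩, hmin⟩ := hX
  set F : (G₂ → A) → (G₁ → A) := fun x => x ∘ φ with hF
  have hcont : Continuous F := continuous_pi fun g => continuous_apply (φ g)
  have hshift : ∀ (g : G₁) (x : G₂ → A), shift g (F x) = F (shift (φ g) x) := by
    intro g x
    funext h
    simp [F, shift, Function.comp, map_mul, map_inv]
  constructor
  · exact hne.image F
  constructor
  · constructor
    · have hXc : IsCompact X := hclosed.isCompact
      exact (hXc.image hcont).isClosed
    · rintro g y ⟨x, hx, rfl⟩
      rw [hshift]
      exact ⟨shift (φ g) x, hinv (φ g) x hx, rfl⟩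
  · rintro y ⟨x, hx, rfl⟩ z ⟨x', hx', rfl⟩
    have h1 : x' ∈ closure {w | ∃ g : G₂, w = shift g x} := hmin x hx hx'
    have h2 : F x' ∈ closure (F '' {w | ∃ g : G₂, w = shift g x}) :=
      (image_closure_subset_closure_image hcont) ⟨x', h1, rfl⟩
    refine closure_mono ?_ h2
    rintro w ⟨v, ⟨g, rfl⟩, rfl⟩
    obtain ⟨g₁, rfl⟩ := hφ g
    exact ⟨g₁, (hshift g₁ x).symm⟩
end

section
/- Let φ be a continuous action of a countable group G on a compact metric space X, let n ∈ ℕ, and let x = (x₁,…,x_n) ∈ X^n. If x is an n-IN-tuple, then x is an n-regionally proximal tuple. In particular, every n-IT-tuple is an n-regionally proximal tuple. -/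
open Set Topology

/-- `J` is an independence set for the tuple of sets `U` under the action `a`. -/
def IsIndepSet {G : Type*} [Group G] {Z : Type*} (a : G → Z → Z) {k : ℕ}
    (U : Fin k → Set Z) (J : Set G) : Prop :=
  ∀ I : Finset G, ↑I ⊆ J → I.Nonempty → ∀ s : G → Fin k,
    (⋂ g ∈ I, a g⁻¹ '' U (s g)).Nonempty

/-- `x` is an `n`-IN-tuple: every product neighborhood admits independence sets of
arbitrarily large finite cardinality. -/
def IsINTuple {G : Type*} [Group G] {Z : Type*} [TopologicalSpace Z]
    (a : G → Z → Z) {n : ℕ} (x : Fin n → Z) : Prop :=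
  ∀ U : Fin n → Set Z, (∀ i, IsOpen (U i) ∧ x i ∈ U i) →
    ∀ N : ℕ, ∃ J : Finset G, N ≤ J.card ∧ IsIndepSet a U ↑J

/-- `x` is an `n`-IT-tuple: every product neighborhood admits an infinite
independence set. -/
def IsITTuple {G : Type*} [Group G] {Z : Type*} [TopologicalSpace Z]
    (a : G → Z → Z) {n : ℕ} (x : Fin n → Z) : Prop :=
  ∀ U : Fin n → Set Z, (∀ i, IsOpen (U i) ∧ x i ∈ U i) →
    ∃ J : Set G, J.Infinite ∧ IsIndepSet a U J

/-- `x` is an `n`-regionally proximal tuple for the action `a`. -/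
def IsRegProxTuple {G : Type*} [Group G] {Z : Type*} [MetricSpace Z]
    (a : G → Z → Z) {n : ℕ} (x : Fin n → Z) : Prop :=
  ∀ ε > (0 : ℝ), ∃ y : Fin n → Z, (∀ i, dist (x i) (y i) < ε) ∧
    ∃ g : G, ∀ i j, dist (a g (y i)) (a g (y j)) < ε

/-- Independence sets are closed under taking subsets. -/
lemma IsIndepSet.mono {G : Type*} [Group G] {Z : Type*} (a : G → Z → Z) {k : ℕ}
    (U : Fin k → Set Z) {J J' : Set G} (hsub : J' ⊆ J) (h : IsIndepSet a U J) :
    IsIndepSet a U J' :=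
  fun I hI => h I (hI.trans hsub)

/-- The key step: if every product neighborhood has an independence set with two
distinct elements, then the tuple is regionally proximal. -/
lemma regProx_of_two {G : Type*} [Group G] {X : Type*} [MetricSpace X]
    (φ : G → X → X)
    (hone : ∀ x, φ (1 : G) x = x)
    (hmul : ∀ (g h : G) (x : X), φ (g * h) x = φ g (φ h x))
    {n : ℕ} (x : Fin n → X)
    (hind : ∀ U : Fin n → Set X, (∀ i, IsOpen (U i) ∧ x i ∈ U i) →
      ∃ g h : G, g ≠ h ∧ IsIndepSet φ U {g, h}) :
    IsRegProxTuple φ x := by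
  classical
  intro ε hε
  rcases Nat.eq_zero_or_pos n with hn | hn
  · refine ⟨x, fun i => by simpa using hε, 1, fun i => absurd i.2 (by omega)⟩
  · set i0 : Fin n := ⟨0, hn⟩ with hi0
    set U : Fin n → Set X := fun i => Metric.ball (x i) (ε / 2) with hUdef
    obtain ⟨g, h, hgh, hJ⟩ := hind U
      (fun i => ⟨Metric.isOpen_ball, Metric.mem_ball_self (by positivity)⟩)
    have hz : ∀ i : Fin n, ∃ z, φ g z ∈ U i ∧ φ h z ∈ U i0 := by
      intro i
      obtain ⟨z, hzmem⟩ := hJ {g, h} (by simp) ⟨g, by simp⟩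
        (fun a => if a = g then i else i0)
      simp only [Set.mem_iInter, Finset.mem_insert, Finset.mem_singleton] at hzmem
      have h1 : z ∈ φ g⁻¹ '' U i := by
        have := hzmem g (Or.inl rfl); simpa using this
      have h2 : z ∈ φ h⁻¹ '' U i0 := by
        have := hzmem h (Or.inr rfl)
        have hne : ¬ (h = g) := fun e => hgh e.symm
        simpa [hne] using this
      obtain ⟨w, hw, hwz⟩ := h1
      obtain ⟨v, hv, hvz⟩ := h2
      refine ⟨z, ?_, ?_⟩
      · have : φ g z = w := by rw [← hwz, ← hmul]; simp [hone]
        rwa [this]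
      · have : φ h z = v := by rw [← hvz, ← hmul]; simp [hone]
        rwa [this]
    choose z hz1 hz2 using hz
    refine ⟨fun i => φ g (z i), ?_, h * g⁻¹, ?_⟩
    · intro i
      have := hz1 i
      rw [hUdef] at this
      have := Metric.mem_ball.mp this
      rw [dist_comm] at this
      linarith
    · intro i j
      have key : ∀ i : Fin n, φ (h * g⁻¹) (φ g (z i)) = φ h (z i) := by
        intro i
        rw [← hmul]
        congr 1
        group
      rw [key i, key j]
      have hi := Metric.mem_ball.mp (hz2 i)
      have hj := Metric.mem_ball.mp (hz2 j)
      calc dist (φ h (z i)) (φ h (z j))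
          ≤ dist (φ h (z i)) (x i0) + dist (x i0) (φ h (z j)) := dist_triangle _ _ _
        _ < ε / 2 + ε / 2 := by rw [dist_comm (x i0)]; linarith
        _ = ε := by ring

/-- For a continuous action of a countable group `G` on a compact
metric space `X`, every `n`-IN-tuple is `n`-regionally proximal; in particular every
`n`-IT-tuple is `n`-regionally proximal. -/
theorem INTuple_regionallyProximal
    {G : Type*} [Group G] [Countable G] {X : Type*} [MetricSpace X] [CompactSpace X]
    (φ : G → X → X) (hcont : ∀ g, Continuous (φ g))
    (hone : ∀ x, φ (1 : G) x = x)
    (hmul : ∀ (g h : G) (x : X), φ (g * h) x = φ g (φ h x))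
    (n : ℕ) (x : Fin n → X) :
    (IsINTuple φ x → IsRegProxTuple φ x) ∧
    (IsITTuple φ x → IsRegProxTuple φ x) := by
  constructor
  · intro hIN
    apply regProx_of_two φ hone hmul x
    intro U hU
    obtain ⟨J, hcard, hind⟩ := hIN U hU 2
    have hc2 : 1 < J.card := by omega
    obtain ⟨g, hg, h, hh, hgh⟩ := Finset.one_lt_card.mp hc2
    exact ⟨g, h, hgh, hind.mono φ U (by
      intro a ha
      rcases ha with rfl | ha
      · exact hg
      · simp only [Set.mem_singleton_iff] at ha; subst ha; exact hh)⟩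
  · intro hIT
    apply regProx_of_two φ hone hmul x
    intro U hU
    obtain ⟨J, hinf, hind⟩ := hIT U hU
    obtain ⟨g, hg, h, hh, hgh⟩ := hinf.nontrivial
    exact ⟨g, h, hgh, hind.mono φ U (by
      intro a ha
      rcases ha with rfl | ha
      · exact hg
      · simp only [Set.mem_singleton_iff] at ha; subst ha; exact hh)⟩
end

section
/- Let G₁, G₂ be countable infinite groups, Σ a finite set, φ : G₁ → G₂ a surjective group homomorphism, and let X ⊆ Σ^{G₂} and Y ⊆ Σ^{G₁} be minimal subshifts. If π : X → Y is a surjective continuous map that is φ-equivariant, i.e., σ_{G₁}^g(π(x)) = π(σ_{G₂}^{φ(g)} x) for all g ∈ G₁ and x ∈ X, then (π × ⋯ × π)(IN_n(X)) = IN_n(Y) for each n ∈ ℕ. -/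
open Filter Set Topology Pointwise

/-- A free subshift: every point has trivial stabilizer. -/
def IsFreeSubshift {G : Type*} [Group G] {A : Type*} (X : Set (G → A)) : Prop :=
  ∀ x ∈ X, ∀ g : G, shift g x = x → g = 1

/-- The shift action restricted to an invariant set, as an action on the subtype. -/
def subShift {G : Type*} [Group G] {A : Type*} [TopologicalSpace A] (X : Set (G → A))
    (hX : ∀ (g : G), ∀ x ∈ X, shift g x ∈ X) : G → ↥X → ↥X :=
  fun g x => ⟨shift g x.1, hX g x.1 x.2⟩

/-- Minimal cardinality of a (finite) subcover of `C` covering the whole space. -/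
noncomputable def coverN {Z : Type*} (C : Set (Set Z)) : ℕ :=
  sInf {n | ∃ F : Finset (Set Z), ↑F ⊆ C ∧ (∀ z : Z, ∃ U ∈ F, z ∈ U) ∧ F.card = n}

/-- The join `⋁_{i=1}^n a^{(S i)⁻¹} U` of the pullbacks of the cover `U` along a
sequence `S` in `G`. -/
def joinCover {G : Type*} [Group G] {Z : Type*} (a : G → Z → Z) (U : Set (Set Z))
    (S : ℕ → G) (n : ℕ) : Set (Set Z) :=
  {V | ∃ f : Fin n → Set Z, (∀ i, f i ∈ U) ∧ V = ⋂ i : Fin n, a (S i.val)⁻¹ '' f i}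

/-- Sequence entropy of the action `a` with respect to the cover `U` along `S`. -/
noncomputable def seqEntropyAlong {G : Type*} [Group G] {Z : Type*} [TopologicalSpace Z]
    (a : G → Z → Z) (U : Set (Set Z)) (S : ℕ → G) : EReal :=
  Filter.limsup
    (fun n : ℕ => ((Real.log (coverN (joinCover a U S n)) / n : ℝ) : EReal))
    Filter.atTop

/-- Topological sequence entropy of the action `a`: the supremum over all open covers
and all sequences in `G` of the corresponding sequence entropies. -/
noncomputable def topSeqEntropy {G : Type*} [Group G] {Z : Type*} [TopologicalSpace Z]
    (a : G → Z → Z) : EReal :=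
  sSup {h | ∃ (U : Set (Set Z)) (S : ℕ → G),
    (∀ V ∈ U, IsOpen V) ∧ ⋃₀ U = Set.univ ∧ h = seqEntropyAlong a U S}

/-- Topological entropy of the `ℤ`-action `a` (the classical entropy of the shift
homeomorphism), via open covers. -/
noncomputable def topEntropyZ {Z : Type*} [TopologicalSpace Z]
    (a : Multiplicative ℤ → Z → Z) : EReal :=
  sSup {h | ∃ U : Set (Set Z), (∀ V ∈ U, IsOpen V) ∧ ⋃₀ U = Set.univ ∧
    h = Filter.limsup
      (fun n : ℕ => ((Real.log (coverN
        (joinCover a U (fun i => Multiplicative.ofAdd (i : ℤ)) n)) / n : ℝ) : EReal))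
      Filter.atTop}

/-!
The image of an IN-tuple is an IN-tuple: an independence set in `G₂` lifts to `G₁` through
a section of `φ`. Conversely, let `y` be an IN-tuple of `Y`. If it is constant, any constant
tuple over it is an IN-tuple, since return times in a minimal subshift over an infinite group
are syndetic, hence infinite. Otherwise two coordinates of `y` differ; as the kernel of `φ`
acts trivially on `Y`, `φ` is injective on independence sets of small neighbourhoods of `y`,
so the preimages under `π` of these neighbourhoods have arbitrarily large independence sets
in `G₂`. Shrinking these preimages inside finer and finer finite clopen covers of `X` while
keeping that property yields the required IN-tuple in the fibres of `π`. The shrinking rests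
on the union lemma: if a tuple of finite unions has arbitrarily large independence sets, so
does the tuple of some choice of pieces; it follows from Ramsey's theorem, colouring
`m`-subsets of a large independence set by the patterns of pieces that have a common witness
on them.
-/

open Finset in
theorem Set.Infinite.exists_infinite_homogeneous {κ : Type*} [Finite κ] (m : ℕ)
    (f : Finset ℕ → κ) {X : Set ℕ} (hX : X.Infinite) :
    ∃ H ⊆ X, H.Infinite ∧ ∃ c, ∀ S : Finset ℕ, ↑S ⊆ H → #S = m → f S = c := by
  induction m generalizing f X with
  | zero => exact ⟨X, subset_rfl, hX, f ∅, fun S _ hS => by rw [Finset.card_eq_zero.mp hS]⟩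
  | succ m ih =>
    have step : ∀ Y : {Y : Set ℕ // Y.Infinite}, ∃ Y' : {Y : Set ℕ // Y.Infinite},
        Y'.1 ⊆ Y.1 \ Set.Iic (sInf Y.1) ∧
          ∃ c, ∀ S : Finset ℕ, ↑S ⊆ Y'.1 → #S = m → f (insert (sInf Y.1) S) = c := by
      rintro ⟨Y, hY⟩
      obtain ⟨Y', hY'Y, hY', hc⟩ :=
        ih (fun S => f (insert (sInf Y) S)) (hY.sdiff (Set.finite_Iic (sInf Y)))
      exact ⟨⟨Y', hY'⟩, hY'Y, hc⟩
    choose next hnext color hcolor using step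
    set Ys : ℕ → {Y : Set ℕ // Y.Infinite} := fun i => next^[i] ⟨X, hX⟩
    have hYs_succ (i : ℕ) : Ys (i + 1) = next (Ys i) := Function.iterate_succ_apply' ..
    set a : ℕ → ℕ := fun i => sInf (Ys i).1
    have ha_mem (i : ℕ) : a i ∈ (Ys i).1 := Nat.sInf_mem (Ys i).2.nonempty
    have hYs_anti : Antitone fun i => (Ys i).1 := antitone_nat_of_succ_le fun i =>
      (hYs_succ i ▸ hnext (Ys i)).trans Set.sdiff_subset
    have ha_succ {i j : ℕ} (hij : i < j) : a j ∈ (Ys (i + 1)).1 := hYs_anti hij (ha_mem j)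
    have ha : StrictMono a := strictMono_nat_of_lt_succ fun i => by
      have := ha_succ i.lt_succ_self
      rw [hYs_succ] at this
      exact not_le.mp (hnext (Ys i) this).2
    obtain ⟨c, hc⟩ := Finite.exists_infinite_fiber (color ∘ Ys)
    refine ⟨a '' (color ∘ Ys ⁻¹' {c}), ?_, (Set.infinite_coe_iff.mp hc).image ha.injective.injOn,
      c, fun S hS hcard => ?_⟩
    · rintro _ ⟨i, -, rfl⟩
      exact hYs_anti (Nat.zero_le i) (ha_mem i)
    have hne : S.Nonempty := card_pos.mp (by omega)
    obtain ⟨i, hi, hia⟩ := hS (S.min'_mem hne)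
    have herase : ↑(S.erase (a i)) ⊆ (next (Ys i)).1 := by
      intro x hx
      obtain ⟨hxa, hxS⟩ := mem_erase.mp hx
      obtain ⟨j, -, rfl⟩ := hS hxS
      have hij : i < j := ha.lt_iff_lt.mp <|
        lt_of_le_of_ne (hia ▸ S.min'_le _ hxS) (Ne.symm hxa)
      exact hYs_succ i ▸ ha_succ hij
    rw [← insert_erase (hia ▸ S.min'_mem hne : a i ∈ S), hcolor (Ys i) _ herase
      (by rw [card_erase_of_mem (hia ▸ S.min'_mem hne), hcard]; rfl)]
    exact hi

open Finset in
theorem exists_finset_fin_homogeneous {κ : Type*} [Finite κ] (m s : ℕ) :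
    ∃ N, ∀ f : Finset (Fin N) → κ, ∃ H : Finset (Fin N), #H = s ∧
      ∃ c, ∀ S ⊆ H, #S = m → f S = c := by
  by_contra! hbad
  choose f hf using hbad
  set F : ℕ → Finset ℕ → κ := fun N S => f N {j | (j : ℕ) ∈ S}
  have hlim (S : Finset ℕ) : ∃ c, ∀ᶠ N in hyperfilter ℕ, F N S = c := by
    obtain ⟨c, hc⟩ := ((hyperfilter ℕ).map (F · S)).eq_pure_of_finite
    exact ⟨c, show {c} ∈ (hyperfilter ℕ).map (F · S) by rw [hc]; rfl⟩
  choose g hg using hlim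
  obtain ⟨H, -, hH, c, hc⟩ := Set.infinite_univ.exists_infinite_homogeneous m g
  obtain ⟨T, hTH, hT⟩ := hH.exists_subset_card_eq s
  obtain ⟨N, hN, hTN⟩ : ∃ N, (∀ S ∈ T.powerset, F N S = g S) ∧ ∀ x ∈ T, x < N :=
    (((Filter.eventually_all_finset _).mpr fun S _ => hg S).and
      ((Filter.eventually_all_finset _).mpr fun x _ =>
        Nat.hyperfilter_le_atTop (Filter.eventually_gt_atTop x))).exists
  obtain ⟨S, hST, hS, hne⟩ := hf N (T.attachFin hTN) (by rw [card_attachFin, hT]) c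
  refine hne ?_
  have hSmap : S.map Fin.valEmbedding ⊆ T := fun x hx => by
    obtain ⟨j, hj, rfl⟩ := mem_map.mp hx
    exact (mem_attachFin hTN).mp (hST hj)
  have hfilter : ({j | (j : ℕ) ∈ S.map Fin.valEmbedding} : Finset (Fin N)) = S := by
    ext j; simp [Fin.val_inj]
  have hFS := hN _ (mem_powerset.mpr hSmap)
  simp only [F, hfilter] at hFS
  rw [hFS]
  exact hc _ ((coe_subset.mpr hSmap).trans hTH) (by rw [card_map, hS])

section Independence

open Finset

variable {ι Z : Type*} {k : ℕ}

-- In the application `V g i = a g⁻¹ '' U i`; as intersections grow on subsets, testing all of `J`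
-- covers its nonempty subsets as well.
def IsIndepFinset (V : ι → Fin k → Set Z) (J : Finset ι) : Prop :=
  ∀ s : ι → Fin k, (⋂ g ∈ J, V g (s g)).Nonempty

def HasLargeIndepFinsets (V : ι → Fin k → Set Z) : Prop :=
  ∀ N : ℕ, ∃ J : Finset ι, N ≤ #J ∧ IsIndepFinset V J

variable {V V' : ι → Fin k → Set Z} {J J' : Finset ι}

theorem IsIndepFinset.mono (h : IsIndepFinset V J) (hV : V ≤ V') : IsIndepFinset V' J :=
  fun s => (h s).mono <| Set.iInter₂_mono fun g _ => hV g (s g)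

theorem IsIndepFinset.subset (h : IsIndepFinset V J) (hJ : J' ⊆ J) : IsIndepFinset V J' :=
  fun s => (h s).mono <| Set.biInter_subset_biInter_left hJ

theorem IsIndepFinset.image {ι' Z' : Type*} [DecidableEq ι'] {W : ι' → Fin k → Set Z'}
    (h : IsIndepFinset V J) (f : Z → Z') (σ : ι → ι')
    (hf : ∀ g i z, z ∈ V g i → f z ∈ W (σ g) i) : IsIndepFinset W (J.image σ) := by
  intro s
  obtain ⟨z, hz⟩ := h (s ∘ σ)
  refine ⟨f z, Set.mem_iInter₂.mpr fun g' hg' => ?_⟩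
  obtain ⟨g, hg, rfl⟩ := mem_image.mp hg'
  exact hf _ _ _ (Set.mem_iInter₂.mp hz g hg)

theorem HasLargeIndepFinsets.mono (h : HasLargeIndepFinsets V) (hV : V ≤ V') :
    HasLargeIndepFinsets V' :=
  fun N => (h N).imp fun _ hJ => ⟨hJ.1, hJ.2.mono hV⟩

theorem HasLargeIndepFinsets.exists_nonempty (h : HasLargeIndepFinsets V) (i : Fin k) :
    ∃ g, (V g i).Nonempty := by
  obtain ⟨J, hJ, hind⟩ := h 1
  obtain ⟨g, hg⟩ := card_pos.mp hJ
  exact ⟨g, (hind fun _ => i).mono (Set.iInter₂_subset g hg)⟩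

theorem finProdFinEquiv_lt_of_fst_lt {R : ℕ} {p q : Fin R × Fin k} (h : p.1 < q.1) :
    finProdFinEquiv p < finProdFinEquiv q := by
  have hk : k * (p.1 + 1) ≤ k * q.1 := Nat.mul_le_mul_left k h
  have := p.2.isLt
  simp only [Fin.lt_def, finProdFinEquiv_apply_val]
  rw [mul_add, mul_one] at hk
  omega

variable {W : Type*} [Finite W]

/-- A single witness of the independence of `R` blocks, each block carrying every label once,
picks a piece in every slot; by pigeonhole, `m` of the blocks pick the same pieces. -/
theorem exists_mem_blocks (hk : 0 < k) {m R : ℕ} (hR : Nat.card (Fin k → W) * m < R)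
    {D : ι → Fin k → W → Set Z} {J : Finset ι} (e : Fin R × Fin k → ι) (he : e.Injective)
    (heJ : ∀ p, e p ∈ J) (h : IsIndepFinset (fun g i => ⋃ w, D g i w) J) :
    ∃ (c : Fin k → W) (r : Fin m ↪o Fin R) (z : Z), ∀ j v, z ∈ D (e (r j, v)) v (c v) := by
  classical
  have : Fintype W := Fintype.ofFinite W
  obtain ⟨z, hz⟩ := h (Function.extend e Prod.snd fun _ => ⟨0, hk⟩)
  have hz' (r : Fin R) (v : Fin k) : z ∈ ⋃ w, D (e (r, v)) v w := by
    have := Set.mem_iInter₂.mp hz (e (r, v)) (heJ _)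
    rwa [he.extend_apply] at this
  choose cell hcell using fun r v => Set.mem_iUnion.mp (hz' r v)
  obtain ⟨c, hc⟩ := Fintype.exists_lt_card_fiber_of_mul_lt_card cell
    (by simpa [Nat.card_eq_fintype_card] using hR)
  obtain ⟨B, hB, hBcard⟩ := exists_subset_card_eq hc.le
  refine ⟨c, B.orderEmbOfFin hBcard, z, fun j v => ?_⟩
  rw [← (mem_filter.mp (hB (B.orderEmbOfFin_mem hBcard j))).2]
  exact hcell _ v

theorem exists_range_eq_map_iff {m N : ℕ} {P : (Fin m ↪o Fin N) → Prop} (d : Fin m ↪o Fin N) :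
    (∃ d' : Fin m ↪o Fin N, Set.range d' = ↑(univ.map d.toEmbedding) ∧ P d') ↔ P d := by
  simp only [coe_map, coe_univ, Set.image_univ, RelEmbedding.coe_toEmbedding,
    OrderEmbedding.range_inj, exists_eq_left]

theorem isIndepFinset_image_of_forall_nonempty [DecidableEq ι] {m : ℕ} (d : Fin m → ι)
    (h : ∀ τ : Fin m → Fin k, (⋂ j, V (d j) (τ j)).Nonempty) : IsIndepFinset V (univ.image d) := by
  intro s
  obtain ⟨z, hz⟩ := h (s ∘ d)
  refine ⟨z, Set.mem_iInter₂.mpr fun g hg => ?_⟩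
  obtain ⟨j, -, rfl⟩ := mem_image.mp hg
  exact Set.mem_iInter.mp hz j

/-- Kerr–Li's union lemma, via Ramsey's theorem. -/
theorem exists_isIndepFinset_choice (k m : ℕ) :
    ∃ M, ∀ (D : ι → Fin k → W → Set Z) (J : Finset ι), M ≤ #J →
      IsIndepFinset (fun g i => ⋃ w, D g i w) J →
      ∃ c : Fin k → W, ∃ J' ⊆ J, #J' = m ∧ IsIndepFinset (fun g i => D g i (c i)) J' := by
  classical
  rcases Nat.eq_zero_or_pos k with rfl | hk
  · refine ⟨m, fun D J hJ h => ?_⟩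
    obtain ⟨J', hJ', hJ'card⟩ := exists_subset_card_eq hJ
    exact ⟨finZeroElim, J', hJ', hJ'card, (h.subset hJ').mono fun _ i => i.elim0⟩
  set R := Nat.card (Fin k → W) * m + 1
  obtain ⟨N, hN⟩ :=
    exists_finset_fin_homogeneous (κ := (Fin m → Fin k) → (Fin k → W) → Prop) m (R * k)
  refine ⟨N, fun D J hJ h => ?_⟩
  let u : Fin N ↪ ι :=
    (Fin.castLEEmb hJ).trans (J.equivFin.symm.toEmbedding.trans (.subtype _))
  have huJ (j : Fin N) : u j ∈ J := (J.equivFin.symm _).2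
  -- An `m`-subset `S` is coloured by the label patterns `τ` (read along the increasing
  -- enumeration of `S`) and piece choices `c` that have a common witness on `S`.
  obtain ⟨H, hH, col, hcol⟩ := hN fun S τ c => ∃ d : Fin m ↪o Fin N, Set.range d = ↑S ∧
    (⋂ j, D (u (d j)) (τ j) (c (τ j))).Nonempty
  set eH := H.orderEmbOfFin hH
  have hcol_iff (d : Fin m ↪o Fin (R * k)) (τ : Fin m → Fin k) (c : Fin k → W) :
      col τ c ↔ (⋂ j, D (u (eH (d j))) (τ j) (c (τ j))).Nonempty := by
    rw [← hcol (univ.map (d.trans eH).toEmbedding) (fun x hx => ?_) (by simp)]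
    · exact exists_range_eq_map_iff (d.trans eH)
    · obtain ⟨j, -, rfl⟩ := mem_map.mp hx
      exact H.orderEmbOfFin_mem hH _
  obtain ⟨c, r, z, hz⟩ := exists_mem_blocks hk (Nat.lt_succ_self _)
    (fun p => u (eH (finProdFinEquiv p)))
    (fun p q hpq => finProdFinEquiv.injective (eH.injective (u.injective hpq)))
    (fun _ => huJ _) h
  -- the slots of the blocks `r j` carrying the labels `τ j`
  set slots : (Fin m → Fin k) → Fin m ↪o Fin (R * k) := fun τ =>
    OrderEmbedding.ofStrictMono (fun j => finProdFinEquiv (r j, τ j))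
      fun j j' hjj' => finProdFinEquiv_lt_of_fst_lt (r.strictMono hjj')
  have hcol_all (τ : Fin m → Fin k) : col τ c :=
    (hcol_iff (slots τ) τ c).mpr ⟨z, Set.mem_iInter.mpr fun j => hz j (τ j)⟩
  set d₀ := slots fun _ => ⟨0, hk⟩
  refine ⟨c, univ.image (u ∘ eH ∘ d₀), fun g hg => ?_, ?_,
    isIndepFinset_image_of_forall_nonempty _ fun τ => (hcol_iff d₀ τ c).mp (hcol_all τ)⟩
  · obtain ⟨j, -, rfl⟩ := mem_image.mp hg
    exact huJ _
  · rw [Finset.card_image_of_injective _ (u.injective.comp (eH.injective.comp d₀.injective)),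
      card_univ, Fintype.card_fin]

theorem exists_choice_forall_hasLargeIndepFinsets {D : ℕ → ι → Fin k → W → Set Z}
    (hD : Antitone D) (h : ∀ p, HasLargeIndepFinsets fun g i => ⋃ w, D p g i w) :
    ∃ c : Fin k → W, ∀ p, HasLargeIndepFinsets fun g i => D p g i (c i) := by
  have (p : ℕ) : ∃ c : Fin k → W, ∃ J : Finset ι, #J = p ∧
      IsIndepFinset (fun g i => D p g i (c i)) J := by
    obtain ⟨M, hM⟩ := exists_isIndepFinset_choice (ι := ι) (Z := Z) (W := W) k p
    obtain ⟨J, hJ, hind⟩ := h p M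
    obtain ⟨c, J', -, hJ', hind'⟩ := hM (D p) J hJ hind
    exact ⟨c, J', hJ', hind'⟩
  choose c J hJ hind using this
  obtain ⟨c₀, hc₀⟩ := Finite.exists_infinite_fiber c
  refine ⟨c₀, fun p N => ?_⟩
  obtain ⟨q, hq, hpq⟩ := (Set.infinite_coe_iff.mp hc₀).exists_gt (max p N)
  refine ⟨J q, (hJ q).symm ▸ (le_max_right p N).trans hpq.le, ?_⟩
  rw [← show c q = c₀ from hq]
  exact (hind q).mono fun g i => hD ((le_max_left p N).trans hpq.le) g i (c q i)

end Independence

theorem isINTuple_iff {G Z : Type*} [Group G] [TopologicalSpace Z] {a : G → Z → Z} {n : ℕ}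
    {x : Fin n → Z} :
    IsINTuple a x ↔ ∀ U : Fin n → Set Z, (∀ i, IsOpen (U i) ∧ x i ∈ U i) →
      HasLargeIndepFinsets fun g i => a g⁻¹ '' U i := by
  refine forall₂_congr fun U _ => ⟨fun h N => ?_, fun h N => ?_⟩
  · obtain ⟨J, hJ, hind⟩ := h (N + 1)
    exact ⟨J, N.le_succ.trans hJ, hind J subset_rfl (Finset.card_pos.mp (by omega))⟩
  · obtain ⟨J, hJ, hind⟩ := h N
    exact ⟨J, hJ, fun I hI _ s => (hind s).mono (Set.biInter_subset_biInter_left hI)⟩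

theorem IsINTuple.map {G₁ G₂ Z Z' : Type*} [Group G₁] [Group G₂] [TopologicalSpace Z]
    [TopologicalSpace Z'] {a : G₂ → Z → Z} {b : G₁ → Z' → Z'} {φ : G₁ →* G₂}
    (hφ : Function.Surjective φ) {π : Z → Z'} (hπ : Continuous π)
    (hequiv : ∀ g z, π (a (φ g) z) = b g (π z)) {n : ℕ} {x : Fin n → Z} (hx : IsINTuple a x) :
    IsINTuple b (π ∘ x) := by
  classical
  refine isINTuple_iff.mpr fun V hV N => ?_
  obtain ⟨J, hJ, hind⟩ := isINTuple_iff.mp hx (fun i => π ⁻¹' V i)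
    (fun i => ⟨(hV i).1.preimage hπ, (hV i).2⟩) N
  refine ⟨J.image (Function.surjInv hφ), ?_, hind.image π _ ?_⟩
  · rwa [Finset.card_image_of_injective _ (Function.injective_surjInv hφ)]
  rintro h i _ ⟨z, hz, rfl⟩
  refine ⟨π z, hz, ?_⟩
  rw [← hequiv, map_inv, Function.surjInv_eq hφ]

section Lifting

variable {G Z : Type*} [Group G] {W : ℕ → Type*} [∀ m, Finite (W m)] {n : ℕ}

theorem exists_seq_refining_hasLargeIndepFinsets (a : G → Z → Z) (P : (m : ℕ) → W m → Set Z)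
    (hP : ∀ m z, ∃ w, z ∈ P m w) (Q : Fin n → ℕ → Set Z) (hQ : ∀ i, Antitone (Q i))
    (h : ∀ p, HasLargeIndepFinsets fun g i => a g⁻¹ '' Q i p) :
    ∃ C : ℕ → Fin n → Set Z, C 0 = (fun _ => univ) ∧ (∀ m i, ∃ w, C (m + 1) i = C m i ∩ P m w) ∧
      ∀ m p, HasLargeIndepFinsets fun g i => a g⁻¹ '' (C m i ∩ Q i p) := by
  set Good : (Fin n → Set Z) → Prop :=
    fun C => ∀ p, HasLargeIndepFinsets fun g i => a g⁻¹ '' (C i ∩ Q i p)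
  have hstep (m : ℕ) (C : {C // Good C}) : ∃ c : Fin n → W m, Good fun i => C.1 i ∩ P m (c i) := by
    refine exists_choice_forall_hasLargeIndepFinsets
      (D := fun p g i w => a g⁻¹ '' (C.1 i ∩ P m w ∩ Q i p))
      (fun p q hpq g i w => image_mono (inter_subset_inter_right _ (hQ i hpq))) fun p => ?_
    refine (C.2 p).mono fun g i => ?_
    rw [← image_iUnion]
    refine image_mono fun z hz => ?_
    obtain ⟨w, hw⟩ := hP m z
    exact mem_iUnion.mpr ⟨w, ⟨hz.1, hw⟩, hz.2⟩
  choose c hc using hstep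
  set C : ℕ → {C // Good C} := fun m =>
    Nat.rec ⟨fun _ => univ, by simpa only [Good, univ_inter] using h⟩ (fun m C => ⟨_, hc m C⟩) m
  exact ⟨fun m => (C m).1, rfl, fun m i => ⟨c m (C m) i, rfl⟩, fun m => (C m).2⟩

/-- The points `x i` are the intersections of pieces of finer and finer finite closed covers,
chosen one after the other so as to keep arbitrarily large independence sets. -/
theorem exists_isINTuple_of_forall_hasLargeIndepFinsets [TopologicalSpace Z] [CompactSpace Z]
    (a : G → Z → Z) (P : (m : ℕ) → W m → Set Z) (hPc : ∀ m w, IsClosed (P m w))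
    (hP : ∀ m z, ∃ w, z ∈ P m w)
    (hPfine : ∀ z U, IsOpen U → z ∈ U → ∃ m, ∀ w, z ∈ P m w → P m w ⊆ U)
    (Q : Fin n → ℕ → Set Z) (hQc : ∀ i p, IsClosed (Q i p)) (hQ : ∀ i, Antitone (Q i))
    (h : ∀ p, HasLargeIndepFinsets fun g i => a g⁻¹ '' Q i p) :
    ∃ x : Fin n → Z, (∀ i p, x i ∈ Q i p) ∧ IsINTuple a x := by
  obtain ⟨C, hC0, hCsucc, hC⟩ := exists_seq_refining_hasLargeIndepFinsets a P hP Q hQ h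
  have hCanti (i : Fin n) : Antitone fun m => C m i := antitone_nat_of_succ_le fun m => by
    obtain ⟨w, hw⟩ := hCsucc m i
    exact hw ▸ inter_subset_left
  have hCc (m : ℕ) (i : Fin n) : IsClosed (C m i) := by
    induction m with
    | zero => exact hC0 ▸ isClosed_univ
    | succ m ih =>
      obtain ⟨w, hw⟩ := hCsucc m i
      exact hw ▸ ih.inter (hPc m w)
  have hlim (i : Fin n) : ∃ x, ∀ m, x ∈ C m i ∩ Q i m :=
    nonempty_iInter.mp <| IsCompact.nonempty_iInter_of_sequence_nonempty_isCompact_isClosed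
      (fun m => C m i ∩ Q i m)
      (fun m => inter_subset_inter (hCanti i m.le_succ) (hQ i m.le_succ))
      (fun m => ((hC m m).exists_nonempty i).elim fun _ hg => hg.of_image)
      ((hCc 0 i).inter (hQc i 0)).isCompact (fun m => (hCc m i).inter (hQc i m))
  choose x hx using hlim
  refine ⟨x, fun i p => (hx i p).2, isINTuple_iff.mpr fun U hU => ?_⟩
  have hCU (i : Fin n) : ∃ m, C m i ⊆ U i := by
    obtain ⟨m, hm⟩ := hPfine (x i) (U i) (hU i).1 (hU i).2
    obtain ⟨w, hw⟩ := hCsucc m i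
    have hxw : x i ∈ P m w := (hw ▸ (hx i (m + 1)).1).2
    exact ⟨m + 1, hw ▸ inter_subset_right.trans (hm w hxw)⟩
  choose mU hmU using hCU
  exact (hC (Finset.univ.sup mU) 0).mono fun g i => image_mono <| inter_subset_left.trans <|
    (hCanti i (Finset.le_sup (Finset.mem_univ i))).trans (hmU i)

end Lifting

section Cylinder

variable {Γ A : Type*} (κ : ℕ → Γ)

def cylinder {m : ℕ} (w : Fin m → A) : Set (Γ → A) :=
  {x | ∀ j : Fin m, x (κ j) = w j}

theorem mem_cylinder_self (m : ℕ) (x : Γ → A) : x ∈ cylinder κ fun j : Fin m => x (κ j) :=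
  fun _ => rfl

theorem cylinder_anti (x : Γ → A) : Antitone fun m => cylinder κ fun j : Fin m => x (κ j) :=
  fun _ _ hpq _ hz j => hz ⟨j, j.2.trans_le hpq⟩

variable {κ}

theorem eq_of_forall_mem_cylinder (hκ : κ.Surjective) {x y : Γ → A}
    (h : ∀ m, x ∈ cylinder κ fun j : Fin m => y (κ j)) : x = y :=
  funext fun g => by
    obtain ⟨j, rfl⟩ := hκ g
    exact h (j + 1) ⟨j, j.lt_succ_self⟩

theorem exists_disjoint_cylinder (hκ : κ.Surjective) {x y : Γ → A} (hxy : x ≠ y) :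
    ∃ m₀, ∀ m ≥ m₀, Disjoint (cylinder κ fun j : Fin m => x (κ j))
      (cylinder κ fun j : Fin m => y (κ j)) := by
  obtain ⟨g, hg⟩ := Function.ne_iff.mp hxy
  obtain ⟨j, rfl⟩ := hκ g
  refine ⟨j + 1, fun m hm => disjoint_left.mpr fun z hzx hzy => hg ?_⟩
  exact (hzx ⟨j, by omega⟩).symm.trans (hzy ⟨j, by omega⟩)

variable [TopologicalSpace A]

theorem exists_cylinder_subset (hκ : κ.Surjective) {x : Γ → A} {U : Set (Γ → A)}
    (hU : U ∈ 𝓝 x) : ∃ m, (cylinder κ fun j : Fin m => x (κ j)) ⊆ U := by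
  rw [nhds_pi, Filter.mem_pi] at hU
  obtain ⟨I, hI, t, ht, hIt⟩ := hU
  refine ⟨hI.toFinset.sup fun g => Function.surjInv hκ g + 1, fun z hz => hIt fun g hg => ?_⟩
  have hlt : Function.surjInv hκ g < hI.toFinset.sup fun g => Function.surjInv hκ g + 1 :=
    Nat.lt_of_succ_le (Finset.le_sup (f := fun g => Function.surjInv hκ g + 1)
      (hI.mem_toFinset.mpr hg))
  have := hz ⟨_, hlt⟩
  simp only [Function.surjInv_eq hκ] at this
  exact this ▸ mem_of_mem_nhds (ht g)

variable [DiscreteTopology A]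

theorem isClopen_cylinder (κ : ℕ → Γ) {m : ℕ} (w : Fin m → A) : IsClopen (cylinder κ w) := by
  have : cylinder κ w = ⋂ j : Fin m, (fun x : Γ → A => x (κ j)) ⁻¹' {w j} := by
    ext x; simp [cylinder]
  rw [this]
  exact isClopen_iInter_of_finite fun j => (isClopen_discrete _).preimage (continuous_apply _)

theorem exists_isINTuple_of_isClosed [Finite A] {G : Type*} [Group G] (hκ : κ.Surjective)
    {X : Set (Γ → A)} (hX : IsClosed X) (a : G → X → X) {n : ℕ} (Q : Fin n → ℕ → Set X)
    (hQc : ∀ i p, IsClosed (Q i p)) (hQ : ∀ i, Antitone (Q i))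
    (h : ∀ p, HasLargeIndepFinsets fun g i => a g⁻¹ '' Q i p) :
    ∃ x : Fin n → X, (∀ i p, x i ∈ Q i p) ∧ IsINTuple a x := by
  have : CompactSpace X := isCompact_iff_compactSpace.mp hX.isCompact
  refine exists_isINTuple_of_forall_hasLargeIndepFinsets a
    (fun m (w : Fin m → A) => Subtype.val ⁻¹' cylinder κ w)
    (fun m w => (isClopen_cylinder κ w).isClosed.preimage continuous_subtype_val)
    (fun m z => ⟨_, mem_cylinder_self κ m z.1⟩) (fun z U hU hzU => ?_) Q hQc hQ h
  obtain ⟨U', hU', hU'U⟩ := (mem_nhds_subtype X z U).mp (hU.mem_nhds hzU)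
  obtain ⟨m, hm⟩ := exists_cylinder_subset hκ hU'
  exact ⟨m, fun w hzw z' hz' => hU'U (hm fun j => (hz' j).trans (hzw j).symm)⟩

end Cylinder

section Shift

variable {G A : Type*} [Group G] [TopologicalSpace A] {X : Set (G → A)}
  (hX : ∀ g : G, ∀ x ∈ X, shift g x ∈ X)

theorem subShift_one (x : X) : subShift X hX 1 x = x :=
  Subtype.ext <| funext fun h => by simp [subShift, shift]

theorem subShift_mul (g h : G) (x : X) :
    subShift X hX (g * h) x = subShift X hX g (subShift X hX h x) :=
  Subtype.ext <| funext fun k => by simp [subShift, shift, mul_assoc]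

theorem image_subShift_inv (g : G) (S : Set X) :
    subShift X hX g⁻¹ '' S = subShift X hX g ⁻¹' S := by
  ext x
  refine ⟨?_, fun hx => ⟨_, hx, ?_⟩⟩
  · rintro ⟨y, hy, rfl⟩
    rwa [mem_preimage, ← subShift_mul, mul_inv_cancel, subShift_one]
  · rw [← subShift_mul, inv_mul_cancel, subShift_one]

theorem continuous_subShift (g : G) : Continuous (subShift X hX g) :=
  (continuous_pi fun h => (continuous_apply (g⁻¹ * h)).comp continuous_subtype_val).subtype_mk
    fun x : X => hX g x.1 x.2

variable {hX}

theorem IsMinimalSubshift.exists_subShift_mem (hXmin : IsMinimalSubshift X) (x : X)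
    {U : Set X} (hU : IsOpen U) (hne : U.Nonempty) : ∃ g, subShift X hX g x ∈ U := by
  obtain ⟨U', hU', rfl⟩ := isOpen_induced_iff.mp hU
  obtain ⟨y, hy⟩ := hne
  obtain ⟨_, hmem, g, rfl⟩ := mem_closure_iff.mp (hXmin.2.2 x.1 x.2 y.2) U' hU' hy
  exact ⟨g, hmem⟩

/-- Return times are syndetic: finitely many translates `g⁻¹ R` of the return-time set `R`
cover `G`. -/
theorem IsMinimalSubshift.infinite_setOf_subShift_mem [Infinite G] [Finite A] [DiscreteTopology A]
    (hXmin : IsMinimalSubshift X) (x : X) {U : Set X} (hU : IsOpen U) (hx : x ∈ U) :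
    {g | subShift X hX g x ∈ U}.Infinite := by
  have : CompactSpace X := isCompact_iff_compactSpace.mp hXmin.2.1.1.isCompact
  obtain ⟨t, ht⟩ := isCompact_univ.elim_finite_subcover (fun g => subShift X hX g ⁻¹' U)
    (fun g => hU.preimage (continuous_subShift hX g))
    fun y _ => mem_iUnion.mpr (hXmin.exists_subShift_mem y hU ⟨x, hx⟩)
  intro hfin
  refine infinite_univ (α := G) <| (t.finite_toSet.biUnion fun g _ =>
    hfin.preimage (mul_right_injective g).injOn).subset fun h _ => ?_
  obtain ⟨g, hg, hgh⟩ := mem_iUnion₂.mp (ht (mem_univ (subShift X hX h x)))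
  exact mem_iUnion₂.mpr ⟨g, hg, by simpa [subShift_mul] using hgh⟩

theorem IsMinimalSubshift.isINTuple_of_forall_eq [Infinite G] [Finite A] [DiscreteTopology A]
    (hXmin : IsMinimalSubshift X) {n : ℕ} {x : Fin n → X} (hx : ∀ i j, x i = x j) :
    IsINTuple (subShift X hX) x := by
  obtain ⟨x₀, hx₀⟩ : ∃ x₀, ∀ i, x i = x₀ := by
    rcases isEmpty_or_nonempty (Fin n) with _ | ⟨⟨i⟩⟩
    · exact ⟨⟨_, hXmin.1.some_mem⟩, isEmptyElim⟩
    · exact ⟨x i, fun j => hx j i⟩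
  refine isINTuple_iff.mpr fun U hU N => ?_
  obtain ⟨J, hJR, hJ⟩ := (hXmin.infinite_setOf_subShift_mem (hX := hX) x₀
    (isOpen_iInter_of_finite fun i => (hU i).1)
    (mem_iInter.mpr fun i => hx₀ i ▸ (hU i).2)).exists_subset_card_eq N
  refine ⟨J, hJ.ge, fun s => ⟨x₀, mem_iInter₂.mpr fun g hg => ?_⟩⟩
  show x₀ ∈ subShift X hX g⁻¹ '' U (s g)
  rw [image_subShift_inv]
  exact mem_iInter.mp (hJR hg) (s g)

end Shift

section Factor

variable {G₁ G₂ A : Type*} [Group G₁] [Group G₂] [TopologicalSpace A] {X : Set (G₂ → A)}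
  {Y : Set (G₁ → A)} {hX : ∀ g : G₂, ∀ x ∈ X, shift g x ∈ X}
  {hY : ∀ g : G₁, ∀ y ∈ Y, shift g y ∈ Y} {φ : G₁ →* G₂} {π : X → Y}

/-- The kernel of `φ` acts trivially on `Y`, so an independence set for a tuple with two disjoint
sets meets each fibre of `φ` at most once. -/
theorem hasLargeIndepFinsets_preimage (hπs : π.Surjective)
    (hequiv : ∀ g x, π (subShift X hX (φ g) x) = subShift Y hY g (π x)) {n : ℕ}
    {V : Fin n → Set Y} {i j : Fin n} (hij : Disjoint (V i) (V j))
    (h : HasLargeIndepFinsets fun g i => subShift Y hY g⁻¹ '' V i) :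
    HasLargeIndepFinsets fun g i => subShift X hX g⁻¹ '' (π ⁻¹' V i) := by
  classical
  have hker {g : G₁} (hg : φ g = 1) (y : Y) : subShift Y hY g y = y := by
    obtain ⟨x, rfl⟩ := hπs y
    rw [← hequiv, hg, subShift_one]
  intro N
  obtain ⟨J, hJ, hind⟩ := h N
  have hinj : InjOn φ J := by
    intro g hg g' hg' hgg'
    by_contra hne
    obtain ⟨y, hy⟩ := hind (Function.update (fun _ => j) g i)
    have hi := mem_iInter₂.mp hy g hg
    have hj := mem_iInter₂.mp hy g' hg'
    simp only [Function.update_self, Function.update_of_ne (Ne.symm hne),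
      image_subShift_inv, mem_preimage] at hi hj
    refine hij.ne_of_mem hi hj (Eq.symm ?_)
    calc subShift Y hY g' y = subShift Y hY (g * (g⁻¹ * g')) y := by rw [mul_inv_cancel_left]
      _ = subShift Y hY g y := by rw [subShift_mul, hker (g := g⁻¹ * g') (by simp [hgg'])]
  refine ⟨J.image φ, by rwa [Finset.card_image_of_injOn hinj],
    hind.image (Function.surjInv hπs) φ ?_⟩
  intro g i y hy
  rw [image_subShift_inv] at hy ⊢
  rw [mem_preimage, mem_preimage, hequiv, Function.surjInv_eq hπs]
  exact hy

theorem IsINTuple.hasLargeIndepFinsets_preimage_cylinder (hπs : π.Surjective)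
    (hequiv : ∀ g x, π (subShift X hX (φ g) x) = subShift Y hY g (π x)) [DiscreteTopology A]
    {κ : ℕ → G₁} (hκ : κ.Surjective) {n : ℕ} {y : Fin n → Y} (hy : IsINTuple (subShift Y hY) y)
    {i j : Fin n} (hij : y i ≠ y j) (p : ℕ) :
    HasLargeIndepFinsets fun g i => subShift X hX g⁻¹ ''
      (π ⁻¹' (Subtype.val ⁻¹' cylinder κ fun l : Fin p => (y i : G₁ → A) (κ l))) := by
  obtain ⟨p₀, hp₀⟩ := exists_disjoint_cylinder hκ (Subtype.coe_injective.ne hij)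
  have hyp := isINTuple_iff.mp hy
    (fun i => Subtype.val ⁻¹' cylinder κ fun l : Fin (max p p₀) => (y i : G₁ → A) (κ l))
    fun i => ⟨(isClopen_cylinder κ _).isOpen.preimage continuous_subtype_val,
      mem_cylinder_self κ _ _⟩
  exact (hasLargeIndepFinsets_preimage hπs hequiv ((hp₀ _ (le_max_right _ _)).preimage _) hyp).mono
    fun g i => image_mono (preimage_mono (preimage_mono (cylinder_anti κ _ (le_max_left _ _))))

end Factor

theorem image_of_INTuples_under_equivariant_factor_general
    {G₁ G₂ : Type*} [Group G₁] [Group G₂] [Countable G₁] [Countable G₂]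
    [Infinite G₂]
    {A : Type*} [Finite A] [TopologicalSpace A] [DiscreteTopology A]
    (φ : G₁ →* G₂) (hφ : Function.Surjective φ)
    (X : Set (G₂ → A)) (hX : IsSubshift X) (hXmin : IsMinimalSubshift X)
    (Y : Set (G₁ → A)) (hY : IsSubshift Y)
    (π : ↥X → ↥Y) (hπc : Continuous π) (hπs : Function.Surjective π)
    (hequiv : ∀ (g : G₁) (x : ↥X),
      (π (subShift X hX.2 (φ g) x) : G₁ → A) = shift g (π x : G₁ → A))
    (n : ℕ) :
    (fun x : Fin n → ↥X => π ∘ x) '' {x | IsINTuple (subShift X hX.2) x}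
      = {y : Fin n → ↥Y | IsINTuple (subShift Y hY.2) y} := by
  have hequiv' (g : G₁) (x : X) : π (subShift X hX.2 (φ g) x) = subShift Y hY.2 g (π x) :=
    Subtype.ext (hequiv g x)
  refine Set.Subset.antisymm ?_ fun y hy => ?_
  · rintro _ ⟨x, hx, rfl⟩
    exact hx.map hφ hπc hequiv'
  by_cases hsep : ∃ i j, y i ≠ y j
  · obtain ⟨i, j, hij⟩ := hsep
    obtain ⟨κ₁, hκ₁⟩ := exists_surjective_nat G₁
    obtain ⟨κ₂, hκ₂⟩ := exists_surjective_nat G₂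
    obtain ⟨x, hxy, hx⟩ := exists_isINTuple_of_isClosed hκ₂ hX.1 (subShift X hX.2)
      (fun i p => π ⁻¹' (Subtype.val ⁻¹' cylinder κ₁ fun l : Fin p => (y i : G₁ → A) (κ₁ l)))
      (fun i p => ((isClopen_cylinder κ₁ _).isClosed.preimage continuous_subtype_val).preimage hπc)
      (fun i p q hpq => Set.preimage_mono (Set.preimage_mono (cylinder_anti κ₁ _ hpq)))
      (hy.hasLargeIndepFinsets_preimage_cylinder hπs hequiv' hκ₁ hij)
    exact ⟨x, hx, funext fun i => Subtype.ext (eq_of_forall_mem_cylinder hκ₁ (hxy i))⟩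
  · push Not at hsep
    exact ⟨Function.surjInv hπs ∘ y, hXmin.isINTuple_of_forall_eq fun i j => by simp [hsep i j],
      funext fun i => Function.surjInv_eq hπs (y i)⟩

/-- Let `φ : G₁ → G₂` be a surjective group homomorphism, `X` and `Y`
minimal subshifts over `G₂` and `G₁` respectively, and `π : X → Y` a surjective
continuous `φ`-equivariant map. Then `(π × ⋯ × π)(INₙ(X)) = INₙ(Y)` for each `n`. -/
theorem image_of_INTuples_under_equivariant_factor
    {G₁ G₂ : Type*} [Group G₁] [Group G₂] [Countable G₁] [Countable G₂]
    [Infinite G₁] [Infinite G₂]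
    {A : Type*} [Finite A] [TopologicalSpace A] [DiscreteTopology A]
    (φ : G₁ →* G₂) (hφ : Function.Surjective φ)
    (X : Set (G₂ → A)) (hX : IsSubshift X) (hXmin : IsMinimalSubshift X)
    (Y : Set (G₁ → A)) (hY : IsSubshift Y) (hYmin : IsMinimalSubshift Y)
    (π : ↥X → ↥Y) (hπc : Continuous π) (hπs : Function.Surjective π)
    (hequiv : ∀ (g : G₁) (x : ↥X),
      (π (subShift X hX.2 (φ g) x) : G₁ → A) = shift g (π x : G₁ → A))
    (n : ℕ) :
    (fun x : Fin n → ↥X => π ∘ x) '' {x | IsINTuple (subShift X hX.2) x}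
      = {y : Fin n → ↥Y | IsINTuple (subShift Y hY.2) y} :=
  image_of_INTuples_under_equivariant_factor_general φ hφ X hX hXmin Y hY π hπc hπs hequiv n
end

section
/- Let G be a countable infinite group, (Γ_i)_{i≥1} a strictly decreasing sequence of finite-index normal subgroups of G with ⋂_{i≥1} Γ_i = {1_G}, and (D_i)_{i≥1} finite subsets of G such that for every i: D_i is a transversal (set of coset representatives) for G/Γ_i, 1_G ∈ D_i ⊆ D_{i+1}, G = ⋃_{i≥1} D_i, and D_j = ⋃_{γ ∈ D_j ∩ Γ_i} γD_i for all i < j. Define J(0) = {1_G} and recursively J(m) = D_m \ ⋃_{i=0}^{m-1} Γ_{i+1}J(i) for m ≥ 1. Then for every i ≥ 1 and every γ ∈ Γ_i, there exists l ≥ i such that γJ(i) ⊆ Γ_{l+1}J(l). -/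
open Set Pointwise

/-- The sets `J(m)` of the Toeplitz construction: `J(0) = {1}` and
`J(m) = D_m \ ⋃_{i=0}^{m-1} Γ_{i+1} J(i)` for `m ≥ 1`. -/
def Jset {G : Type*} [Group G] (Γ : ℕ → Set G) (D : ℕ → Set G) : ℕ → Set G
  | 0 => {1}
  | (m + 1) => D (m + 1) \ ⋃ i : Fin (m + 1), Γ (i.val + 1) * Jset Γ D i.val

/-- In the Toeplitz construction over a countable infinite group `G`
with a strictly decreasing sequence of finite-index normal subgroups `Γᵢ` and
compatible fundamental domains `Dᵢ`, for every `i ≥ 1` and `γ ∈ Γᵢ` there is `l ≥ i`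
with `γ J(i) ⊆ Γ_{l+1} J(l)`. -/
theorem translate_Jset_subset
    {G : Type*} [Group G] [Countable G] [Infinite G]
    (Γ : ℕ → Subgroup G)
    (hdec : ∀ i, 1 ≤ i → Γ (i + 1) < Γ i)
    (hfin : ∀ i, 1 ≤ i → (Γ i).FiniteIndex)
    (hnorm : ∀ i, 1 ≤ i → (Γ i).Normal)
    (hcap : (⋂ i, ⋂ (_ : 1 ≤ i), (Γ i : Set G)) = {1})
    (D : ℕ → Set G)
    (hDfin : ∀ i, 1 ≤ i → (D i).Finite)
    (htrans : ∀ i, 1 ≤ i → ∀ g : G, ∃! d, d ∈ D i ∧ g⁻¹ * d ∈ Γ i)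
    (hone : ∀ i, 1 ≤ i → (1 : G) ∈ D i)
    (hmono : ∀ i, 1 ≤ i → D i ⊆ D (i + 1))
    (hcover : (⋃ i, ⋃ (_ : 1 ≤ i), D i) = Set.univ)
    (hdecomp : ∀ i j, 1 ≤ i → i < j →
      D j = ⋃ γ ∈ D j ∩ (Γ i : Set G), (fun d => γ * d) '' D i) :
    ∀ i, 1 ≤ i → ∀ γ ∈ Γ i, ∃ l, i ≤ l ∧
      (fun d => γ * d) '' Jset (fun n => (Γ n : Set G)) D i ⊆
        (Γ (l + 1) : Set G) * Jset (fun n => (Γ n : Set G)) D l := by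
  set J : ℕ → Set G := Jset (fun n => (Γ n : Set G)) D with hJdef
  -- monotonicity of Γ (on indices ≥ 1)
  have hΓmono : ∀ k i : ℕ, 1 ≤ k → k ≤ i → (Γ i : Set G) ⊆ (Γ k : Set G) := by
    intro k i hk hki
    induction i, hki using Nat.le_induction with
    | base => exact subset_rfl
    | succ n hn ih => intro x hx; exact ih ((hdec n (hk.trans hn)).le hx)
  -- J m ⊆ D m for m ≥ 1
  have hJsub : ∀ m, 1 ≤ m → J m ⊆ D m := by
    intro m hm
    cases m with
    | zero => omega
    | succ n =>
      have e : J (n+1) = D (n+1) \ ⋃ i : Fin (n+1), (Γ (i.val+1) : Set G) * J i.val := by conv_lhs => rw [hJdef, Jset]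
      rw [e]; exact Set.diff_subset
  -- membership characterization of J m, m ≥ 1
  have hJmem : ∀ m, 1 ≤ m → ∀ y : G,
      y ∈ J m ↔ y ∈ D m ∧ ∀ k, k < m → y ∉ (Γ (k + 1) : Set G) * J k := by
    intro m hm y
    cases m with
    | zero => omega
    | succ n =>
      have e : J (n+1) = D (n+1) \ ⋃ i : Fin (n+1), (Γ (i.val+1) : Set G) * J i.val := by conv_lhs => rw [hJdef, Jset]
      rw [e]
      simp only [Set.mem_diff, Set.mem_iUnion]
      constructor
      · rintro ⟨h1, h2⟩
        exact ⟨h1, fun k hk hky => h2 ⟨⟨k, hk⟩, hky⟩⟩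
      · rintro ⟨h1, h2⟩
        exact ⟨h1, fun ⟨⟨k, hk⟩, hky⟩ => h2 k hk hky⟩
  -- uniqueness of decomposition g = γ x, γ ∈ Γ i, x ∈ D i
  have key : ∀ i, 1 ≤ i → ∀ γ₁ γ₂ : G, γ₁ ∈ Γ i → γ₂ ∈ Γ i →
      ∀ x₁ x₂ : G, x₁ ∈ D i → x₂ ∈ D i → γ₁ * x₁ = γ₂ * x₂ → γ₁ = γ₂ ∧ x₁ = x₂ := by
    intro i hi γ₁ γ₂ hγ₁ hγ₂ x₁ x₂ hx₁ hx₂ heq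
    obtain ⟨d, -, hu⟩ := htrans i hi (γ₁ * x₁)
    have m1 : (γ₁ * x₁)⁻¹ * x₁ ∈ Γ i := by
      have h := (hnorm i hi).conj_mem _ (inv_mem hγ₁) x₁⁻¹
      have e : (γ₁ * x₁)⁻¹ * x₁ = x₁⁻¹ * γ₁⁻¹ * (x₁⁻¹)⁻¹ := by group
      rw [e]; exact h
    have m2 : (γ₁ * x₁)⁻¹ * x₂ ∈ Γ i := by
      have h := (hnorm i hi).conj_mem _ (inv_mem hγ₂) x₂⁻¹
      have e : (γ₁ * x₁)⁻¹ * x₂ = x₂⁻¹ * γ₂⁻¹ * (x₂⁻¹)⁻¹ := by rw [heq]; group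
      rw [e]; exact h
    have e1 : x₁ = d := hu x₁ ⟨hx₁, m1⟩
    have e2 : x₂ = d := hu x₂ ⟨hx₂, m2⟩
    have ex : x₁ = x₂ := e1.trans e2.symm
    refine ⟨?_, ex⟩
    subst ex
    exact mul_right_cancel heq
  -- Lemma J: for i ≤ l, every point of J l lies in a Γ_i-translate of J i contained in J l
  have lemJ : ∀ l i, 1 ≤ i → i ≤ l → ∀ y ∈ J l, ∃ γ' ∈ (Γ i : Set G),
      (∃ x ∈ J i, γ' * x = y) ∧ (fun d => γ' * d) '' J i ⊆ J l := by
    intro l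
    induction l using Nat.strong_induction_on with
    | _ l IH =>
      intro i hi hil y hy
      rcases eq_or_lt_of_le hil with rfl | hlt
      · refine ⟨1, one_mem _, ⟨y, hy, one_mul y⟩, ?_⟩
        rintro z ⟨x, hx, rfl⟩
        simpa using hx
      · have hl1 : 1 ≤ l := hi.trans hil
        have hyD : y ∈ D l := hJsub l hl1 hy
        have hyJ := (hJmem l hl1 y).1 hy
        -- decompose y using hdecomp
        rw [hdecomp i l hi hlt] at hyD
        simp only [Set.mem_iUnion, Set.mem_image] at hyD
        obtain ⟨γ', ⟨hγ'D, hγ'Γ⟩, x, hxD, hxy⟩ := hyD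
        -- x ∈ J i
        have hxJ : x ∈ J i := by
          rw [hJmem i hi]
          refine ⟨hxD, fun k hk hmem => ?_⟩
          obtain ⟨δ, hδ, z, hz, hzeq⟩ := Set.mem_mul.1 hmem
          have hzeq' : δ * z = x := hzeq
          have : y ∈ (Γ (k + 1) : Set G) * J k := by
            refine Set.mem_mul.2 ⟨γ' * δ, ?_, z, hz, by rw [mul_assoc, hzeq', hxy]⟩
            exact mul_mem (hΓmono (k+1) i (by omega) (by omega) hγ'Γ) hδ
          exact hyJ.2 k (hk.trans hlt) this
        -- γ' J i ⊆ J l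
        have hsub : (fun d => γ' * d) '' J i ⊆ J l := by
          rintro w ⟨x', hx', rfl⟩
          rw [hJmem l hl1]
          constructor
          · rw [hdecomp i l hi hlt]
            simp only [Set.mem_iUnion, Set.mem_image]
            exact ⟨γ', ⟨hγ'D, hγ'Γ⟩, x', hJsub i hi hx', rfl⟩
          · intro k hk hmem
            obtain ⟨δ, hδ, z, hz, hzeq⟩ := Set.mem_mul.1 hmem
            have hzeq' : δ * z = γ' * x' := hzeq
            rcases lt_or_ge k i with hki | hik
            · -- k < i : contradiction with x' ∈ J i
              have : x' ∈ (Γ (k + 1) : Set G) * J k := by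
                refine Set.mem_mul.2 ⟨γ'⁻¹ * δ, ?_, z, hz, by rw [mul_assoc, hzeq']; group⟩
                exact mul_mem (inv_mem (hΓmono (k+1) i (by omega) (by omega) hγ'Γ)) hδ
              exact ((hJmem i hi x').1 hx').2 k hki this
            · -- i ≤ k < l : use IH at k
              have hk1 : 1 ≤ k := hi.trans hik
              obtain ⟨γ'', hγ'', ⟨x'', hx'', hx''eq⟩, hsub'⟩ := IH k hk i hi hik z hz
              have hδΓi : δ ∈ (Γ i : Set G) := hΓmono i (k+1) hi (by omega) hδ
              have heq2 : γ' * x' = (δ * γ'') * x'' := by rw [← hzeq', ← hx''eq]; group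
              obtain ⟨hg, hx⟩ := key i hi γ' (δ * γ'') hγ'Γ (mul_mem hδΓi hγ'')
                x' x'' (hJsub i hi hx') (hJsub i hi hx'') heq2
              -- then y ∈ Γ (k+1) J k, contradiction with hy
              have : y ∈ (Γ (k + 1) : Set G) * J k := by
                refine Set.mem_mul.2 ⟨δ, hδ, γ'' * x, ?_, by rw [← hxy, hg]; group⟩
                exact hsub' ⟨x, hxJ, rfl⟩
              exact hyJ.2 k hk this
        exact ⟨γ', hγ'Γ, ⟨x, hxJ, hxy⟩, hsub⟩
  -- main proof
  intro i hi γ hγ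
  rcases Set.eq_empty_or_nonempty (J i) with hJe | ⟨x, hx⟩
  · exact ⟨i, le_rfl, by rw [hJe]; simp⟩
  · -- γ x lies in some D m
    have : γ * x ∈ (⋃ m, ⋃ (_ : 1 ≤ m), D m) := by rw [hcover]; trivial
    simp only [Set.mem_iUnion] at this
    obtain ⟨m, hm1, hmD⟩ := this
    -- hence γ x ∈ Γ (l+1) J l for some l
    have hcov : ∃ l, γ * x ∈ (Γ (l + 1) : Set G) * J l := by
      by_cases hall : ∀ k, k < m → γ * x ∉ (Γ (k + 1) : Set G) * J k
      · refine ⟨m, Set.mem_mul.2 ⟨1, one_mem _, γ * x, ?_, one_mul _⟩⟩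
        exact (hJmem m hm1 (γ * x)).2 ⟨hmD, hall⟩
      · push_neg at hall
        obtain ⟨k, _, hk⟩ := hall
        exact ⟨k, hk⟩
    obtain ⟨l, hl⟩ := hcov
    obtain ⟨δ, hδ, z, hz, hzeq⟩ := Set.mem_mul.1 hl
    have hzeq' : δ * z = γ * x := hzeq
    -- l ≥ i
    have hil : i ≤ l := by
      by_contra hli
      push_neg at hli
      have : x ∈ (Γ (l + 1) : Set G) * J l := by
        refine Set.mem_mul.2 ⟨γ⁻¹ * δ, ?_, z, hz, by rw [mul_assoc, hzeq']; group⟩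
        exact mul_mem (inv_mem (hΓmono (l+1) i (by omega) (by omega) hγ)) hδ
      exact ((hJmem i hi x).1 hx).2 l hli this
    have hl1 : 1 ≤ l := hi.trans hil
    obtain ⟨γ'', hγ'', ⟨x'', hx'', hx''eq⟩, hsub'⟩ := lemJ l i hi hil z hz
    have hδΓi : δ ∈ (Γ i : Set G) := hΓmono i (l+1) hi (by omega) hδ
    have heq2 : γ * x = (δ * γ'') * x'' := by rw [← hzeq', ← hx''eq]; group
    obtain ⟨hg, hxx⟩ := key i hi γ (δ * γ'') hγ (mul_mem hδΓi hγ'')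
      x x'' (hJsub i hi hx) (hJsub i hi hx'') heq2
    refine ⟨l, hil, ?_⟩
    rintro w ⟨u, hu, rfl⟩
    refine Set.mem_mul.2 ⟨δ, hδ, γ'' * u, hsub' ⟨u, hu, rfl⟩, by rw [hg]; group⟩
end

section
/- Let G be a countable infinite group, (Γ_i)_{i≥1} a strictly decreasing sequence of finite-index normal subgroups of G with ⋂_{i≥1} Γ_i = {1_G}, and (D_i)_{i≥1} finite subsets of G such that for every i: D_i is a transversal for G/Γ_i, 1_G ∈ D_i ⊆ D_{i+1}, G = ⋃_{i≥1} D_i, and D_j = ⋃_{γ ∈ D_j ∩ Γ_i} γD_i for all i < j. Define J(0) = {1_G} and recursively J(m) = D_m \ ⋃_{i=0}^{m-1} Γ_{i+1}J(i) for m ≥ 1. Let Σ be a finite set, (α_i)_{i≥1} a sequence in Σ, and η : G → Σ a function satisfying η(g) = α_{m+1} for every m ≥ 0 and every g ∈ Γ_{m+1}J(m). Then for every i ≥ 0 and every γ ∈ Γ_i (with Γ_0 = G), there exists α ∈ Σ such that η(g) = α for every g ∈ γJ(i). -/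
open Set Pointwise

lemma Jset_subset_D {G : Type*} [Group G] (Γ : ℕ → Set G) (D : ℕ → Set G)
    (i : ℕ) (hi : 1 ≤ i) : Jset Γ D i ⊆ D i := by
  match i, hi with
  | (m + 1), _ =>
    intro e he
    simp only [Jset] at he
    exact he.1

lemma Jset_not_mem {G : Type*} [Group G] (Γ : ℕ → Set G) (D : ℕ → Set G)
    {i k : ℕ} (hk : k < i) {e : G} (he : e ∈ Jset Γ D i) :
    e ∉ Γ (k + 1) * Jset Γ D k := by
  match i, hk, he with
  | (m + 1), hk, he =>
    intro hmem
    simp only [Jset] at he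
    exact he.2 (Set.mem_iUnion.mpr ⟨⟨k, hk⟩, hmem⟩)

/-- In the Toeplitz construction, if `η : G → Σ` satisfies
`η(g) = α_{m+1}` for every `g ∈ Γ_{m+1} J(m)`, then for every `i ≥ 0` and every
`γ ∈ Γᵢ` (with `Γ₀ = G`), `η` is constant on `γ J(i)`. -/
theorem eta_constant_on_translates_of_Jset
    {G : Type*} [Group G] [Countable G] [Infinite G]
    (Γ : ℕ → Subgroup G)
    (hdec : ∀ i, 1 ≤ i → Γ (i + 1) < Γ i)
    (hfin : ∀ i, 1 ≤ i → (Γ i).FiniteIndex)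
    (hnorm : ∀ i, 1 ≤ i → (Γ i).Normal)
    (hcap : (⋂ i, ⋂ (_ : 1 ≤ i), (Γ i : Set G)) = {1})
    (D : ℕ → Set G)
    (hDfin : ∀ i, 1 ≤ i → (D i).Finite)
    (htrans : ∀ i, 1 ≤ i → ∀ g : G, ∃! d, d ∈ D i ∧ g⁻¹ * d ∈ Γ i)
    (hone : ∀ i, 1 ≤ i → (1 : G) ∈ D i)
    (hmono : ∀ i, 1 ≤ i → D i ⊆ D (i + 1))
    (hcover : (⋃ i, ⋃ (_ : 1 ≤ i), D i) = Set.univ)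
    (hdecomp : ∀ i j, 1 ≤ i → i < j →
      D j = ⋃ γ ∈ D j ∩ (Γ i : Set G), (fun d => γ * d) '' D i)
    {A : Type*} [Finite A] (αseq : ℕ → A) (η : G → A)
    (hη : ∀ m : ℕ, ∀ g ∈ (Γ (m + 1) : Set G) * Jset (fun n => (Γ n : Set G)) D m,
      η g = αseq (m + 1)) :
    ∀ i : ℕ, ∀ γ ∈ (if i = 0 then (⊤ : Subgroup G) else Γ i),
      ∃ a : A, ∀ g ∈ (fun d => γ * d) '' Jset (fun n => (Γ n : Set G)) D i,
        η g = a := by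
  set S : ℕ → Set G := fun n => (Γ n : Set G) with hS
  set J : ℕ → Set G := Jset S D with hJ
  -- chain lemmas
  have hΓle : ∀ m n : ℕ, 1 ≤ m → m ≤ n → S n ⊆ S m := by
    intro m n hm hmn
    induction n, hmn using Nat.le_induction with
    | base => exact subset_rfl
    | succ n hn ih =>
        exact Set.Subset.trans
          (SetLike.coe_subset_coe.mpr (le_of_lt (hdec n (hm.trans hn)))) ih
  have hDle : ∀ m n : ℕ, 1 ≤ m → m ≤ n → D m ⊆ D n := by
    intro m n hm hmn
    induction n, hmn using Nat.le_induction with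
    | base => exact subset_rfl
    | succ n hn ih => exact ih.trans (hmono n (hm.trans hn))
  -- key step lemma
  have step : ∀ i : ℕ, 1 ≤ i → ∀ d : G, d ∈ D (i + 1) → d ∈ S i → d ∉ S (i + 1) →
      ∀ e ∈ J i, d * e ∈ J (i + 1) := by
    intro i hi d hdD hdΓ hdn e he
    have heD : e ∈ D i := Jset_subset_D S D i hi he
    simp only [hJ, Jset]
    refine ⟨?_, ?_⟩
    · rw [hdecomp i (i + 1) hi (Nat.lt_succ_self i)]
      exact Set.mem_biUnion (Set.mem_inter hdD hdΓ) ⟨e, heD, rfl⟩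
    · intro hbad
      rw [Set.mem_iUnion] at hbad
      obtain ⟨⟨k, hk⟩, hmem⟩ := hbad
      rw [Set.mem_mul] at hmem
      obtain ⟨δ, hδ, f, hf, hδf⟩ := hmem
      simp only [Fin.val_mk] at hδ hf
      rcases Nat.lt_succ_iff_lt_or_eq.mp hk with hk' | hk'
      · -- k < i : e ∈ Γ_{k+1} J(k), contradiction with e ∈ J(i)
        refine Jset_not_mem S D hk' he ?_
        refine Set.mem_mul.mpr ⟨d⁻¹ * δ, ?_, f, hf, ?_⟩
        · exact mul_mem (inv_mem (hΓle (k + 1) i (by omega) (by omega) hdΓ)) hδ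
        · rw [mul_assoc, hδf, ← mul_assoc, inv_mul_cancel, one_mul]
      · -- k = i : transversal uniqueness forces e = f, d = δ ∈ Γ (i+1), contra
        rw [hk'] at hδ hf
        have hfD : f ∈ D i := Jset_subset_D S D i hi hf
        have hh : δ⁻¹ * d ∈ Γ i := mul_mem (inv_mem (hΓle i (i + 1) hi (Nat.le_succ i) hδ)) hdΓ
        have hconj : e⁻¹ * (δ⁻¹ * d) * e⁻¹⁻¹ ∈ Γ i := (hnorm i hi).conj_mem _ hh e⁻¹
        have hef : e⁻¹ * f ∈ Γ i := by
          have hfeq : f = δ⁻¹ * (d * e) := by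
            rw [← hδf, ← mul_assoc, inv_mul_cancel, one_mul]
          have : e⁻¹ * f = e⁻¹ * (δ⁻¹ * d) * e⁻¹⁻¹ := by
            rw [hfeq]; group
          rw [this]; exact hconj
        obtain ⟨x, hx, huniq⟩ := htrans i hi e
        have h1 : f = x := huniq f ⟨hfD, hef⟩
        have h2 : e = x := huniq e ⟨heD, by rw [inv_mul_cancel]; exact one_mem _⟩
        have hfe : f = e := h1.trans h2.symm
        rw [hfe] at hδf
        have : δ = d := mul_right_cancel hδf
        exact hdn (this ▸ hδ)
  -- main induction
  have key : ∀ k i : ℕ, ∀ γ : G, 1 ≤ i → γ ∈ S i → γ ∈ D (i + 1 + k) →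
      ∃ a : A, ∀ e ∈ J i, η (γ * e) = a := by
    intro k
    induction k with
    | zero =>
      intro i γ hi hγΓ hγD
      by_cases hnext : γ ∈ S (i + 1)
      · exact ⟨αseq (i + 1), fun e he =>
          hη i _ (Set.mem_mul.mpr ⟨γ, hnext, e, he, rfl⟩)⟩
      · refine ⟨αseq (i + 2), fun e he => hη (i + 1) _ ?_⟩
        exact Set.mem_mul.mpr ⟨1, one_mem _, γ * e,
          step i hi γ hγD hγΓ hnext e he, one_mul _⟩
    | succ k ih =>
      intro i γ hi hγΓ hγD
      by_cases hnext : γ ∈ S (i + 1)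
      · exact ⟨αseq (i + 1), fun e he =>
          hη i _ (Set.mem_mul.mpr ⟨γ, hnext, e, he, rfl⟩)⟩
      · have hlt : i + 1 < i + 1 + (k + 1) := by omega
        rw [hdecomp (i + 1) (i + 1 + (k + 1)) (by omega) hlt] at hγD
        obtain ⟨β, hβ, hγmem⟩ := Set.mem_iUnion₂.mp hγD
        obtain ⟨hβD, hβΓ⟩ := hβ
        obtain ⟨d, hdD, hγeq⟩ := hγmem
        -- γ = β * d
        have hdΓi : d ∈ S i := by
          have : d = β⁻¹ * γ := by rw [← hγeq]; group
          rw [this]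
          exact mul_mem (inv_mem (hΓle i (i + 1) hi (Nat.le_succ i) hβΓ)) hγΓ
        have hdn : d ∉ S (i + 1) := by
          intro h
          apply hnext
          rw [← hγeq]
          exact mul_mem hβΓ h
        have hβD' : β ∈ D (i + 1 + 1 + k) := by
          have : i + 1 + 1 + k = i + 1 + (k + 1) := by omega
          rw [this]; exact hβD
        obtain ⟨a, ha⟩ := ih (i + 1) β (by omega) hβΓ hβD'
        refine ⟨a, fun e he => ?_⟩
        have := ha (d * e) (step i hi d hdD hdΓi hdn e he)
        rw [← hγeq, mul_assoc]
        exact this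
  -- conclusion
  intro i γ hγ
  by_cases hi : i = 0
  · subst hi
    refine ⟨η γ, ?_⟩
    rintro g ⟨e, he, rfl⟩
    have he1 : e = 1 := by simpa [hJ, Jset] using he
    simp [he1]
  · have hi1 : 1 ≤ i := Nat.one_le_iff_ne_zero.mpr hi
    rw [if_neg hi] at hγ
    have hγu : γ ∈ (⋃ n, ⋃ (_ : 1 ≤ n), D n) := by rw [hcover]; trivial
    obtain ⟨N, hN⟩ := Set.mem_iUnion.mp hγu
    obtain ⟨hN1, hγD⟩ := Set.mem_iUnion.mp hN
    have hγD' : γ ∈ D (i + 1 + (max N (i + 1) - (i + 1))) := by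
      have hle : i + 1 + (max N (i + 1) - (i + 1)) = max N (i + 1) := by omega
      rw [hle]
      exact hDle N (max N (i + 1)) hN1 (le_max_left _ _) hγD
    obtain ⟨a, ha⟩ := key (max N (i + 1) - (i + 1)) i γ hi1 hγ hγD'
    refine ⟨a, ?_⟩
    rintro g ⟨e, he, rfl⟩
    exact ha e he
end

section
/- Let G be a countable infinite group, (Γ_i)_{i≥1} a strictly decreasing sequence of finite-index normal subgroups of G with ⋂_{i≥1} Γ_i = {1_G}, and (D_i)_{i≥1} finite subsets of G such that for every i: D_i is a transversal for G/Γ_i, 1_G ∈ D_i ⊆ D_{i+1}, G = ⋃_{i≥1} D_i, and D_j = ⋃_{γ ∈ D_j ∩ Γ_i} γD_i for all i < j. Define J(0) = {1_G} and recursively J(m) = D_m \ ⋃_{i=0}^{m-1} Γ_{i+1}J(i) for m ≥ 1. Then for every n ≥ 2, J(n) = ⋃_{γ ∈ (D_n ∩ Γ_{n-1}) \ {1_G}} γJ(n-1). -/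
open Set Pointwise

/-- In the Toeplitz construction, for every `n ≥ 2`,
`J(n) = ⋃_{γ ∈ (Dₙ ∩ Γ_{n-1}) \ {1}} γ J(n-1)`. -/
theorem Jset_decomposition
    {G : Type*} [Group G] [Countable G] [Infinite G]
    (Γ : ℕ → Subgroup G)
    (hdec : ∀ i, 1 ≤ i → Γ (i + 1) < Γ i)
    (hfin : ∀ i, 1 ≤ i → (Γ i).FiniteIndex)
    (hnorm : ∀ i, 1 ≤ i → (Γ i).Normal)
    (hcap : (⋂ i, ⋂ (_ : 1 ≤ i), (Γ i : Set G)) = {1})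
    (D : ℕ → Set G)
    (hDfin : ∀ i, 1 ≤ i → (D i).Finite)
    (htrans : ∀ i, 1 ≤ i → ∀ g : G, ∃! d, d ∈ D i ∧ g⁻¹ * d ∈ Γ i)
    (hone : ∀ i, 1 ≤ i → (1 : G) ∈ D i)
    (hmono : ∀ i, 1 ≤ i → D i ⊆ D (i + 1))
    (hcover : (⋃ i, ⋃ (_ : 1 ≤ i), D i) = Set.univ)
    (hdecomp : ∀ i j, 1 ≤ i → i < j →
      D j = ⋃ γ ∈ D j ∩ (Γ i : Set G), (fun d => γ * d) '' D i) :
    ∀ n, 2 ≤ n →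
      Jset (fun k => (Γ k : Set G)) D n =
        ⋃ γ ∈ (D n ∩ (Γ (n - 1) : Set G)) \ {1},
          (fun d => γ * d) '' Jset (fun k => (Γ k : Set G)) D (n - 1) := by
  -- the chain of subgroups is (non-strictly) decreasing from index 1 on
  have chain : ∀ a b : ℕ, 1 ≤ a → a ≤ b → Γ b ≤ Γ a := by
    intro a b ha hab
    induction b, hab using Nat.le_induction with
    | base => exact le_rfl
    | succ b hab ih => exact le_trans (hdec b (ha.trans hab)).le ih
  set Γs : ℕ → Set G := fun k => (Γ k : Set G) with hΓs
  -- membership in `Jset (k+1)`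
  have memJ : ∀ (k : ℕ) (x : G), x ∈ Jset Γs D (k + 1) ↔
      x ∈ D (k + 1) ∧ ∀ i : ℕ, i ≤ k → x ∉ Γs (i + 1) * Jset Γs D i := by
    intro k x
    simp only [Jset, Set.mem_diff, Set.mem_iUnion]
    constructor
    · rintro ⟨h1, h2⟩
      refine ⟨h1, fun i hi hxi => h2 ⟨⟨i, by omega⟩, hxi⟩⟩
    · rintro ⟨h1, h2⟩
      exact ⟨h1, fun ⟨i, hxi⟩ => h2 i.val (by omega) hxi⟩
  have hJsubD : ∀ k : ℕ, Jset Γs D (k + 1) ⊆ D (k + 1) := by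
    intro k
    simp only [Jset]
    exact Set.diff_subset
  intro n hn
  obtain ⟨m, rfl⟩ : ∃ m, n = m + 1 := ⟨n - 1, by omega⟩
  have hm : 1 ≤ m := by omega
  obtain ⟨k, rfl⟩ : ∃ k, m = k + 1 := ⟨m - 1, by omega⟩
  simp only [Nat.add_sub_cancel]
  set m := k + 1
  set J := Jset Γs D with hJdef
  ext x
  simp only [Set.mem_iUnion, Set.mem_image, Set.mem_diff, Set.mem_inter_iff,
    Set.mem_singleton_iff]
  constructor
  · intro hx
    obtain ⟨hxD, hxU⟩ := (memJ m x).mp hx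
    have hxD' := hxD
    rw [hdecomp m (m + 1) hm (by omega)] at hxD'
    simp only [Set.mem_iUnion, Set.mem_image, Set.mem_inter_iff] at hxD'
    obtain ⟨γ, ⟨hγD, hγΓ⟩, d, hd, hγd⟩ := hxD'
    by_cases hdJ : d ∈ J m
    · -- then γ ≠ 1 and we are done
      have hγ1 : γ ≠ 1 := by
        rintro rfl
        have hxJm : x ∈ J m := by rw [← hγd, one_mul]; exact hdJ
        exact hxU m le_rfl ⟨1, (Γ (m + 1)).one_mem, x, hxJm, one_mul x⟩
      exact ⟨γ, ⟨⟨hγD, hγΓ⟩, hγ1⟩, d, hdJ, hγd⟩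
    · -- d lies in some Γ_{i+1} J(i), contradiction
      exfalso
      have := (memJ k d).not.mp hdJ
      push_neg at this
      obtain ⟨i, hik, σ, hσ, j, hjJ, hσj⟩ := this hd
      have hγi : γ ∈ Γ (i + 1) := chain (i + 1) m (by omega) (by omega) hγΓ
      have hσj' : σ * j = d := hσj
      refine hxU i (by omega) ⟨γ * σ, (Γ (i + 1)).mul_mem hγi hσ, j, hjJ, ?_⟩
      show γ * σ * j = x
      rw [mul_assoc, hσj', hγd]
  · rintro ⟨γ, ⟨⟨hγD, hγΓ⟩, hγ1⟩, d, hdJ, rfl⟩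
    have hdD : d ∈ D m := hJsubD k hdJ
    refine (memJ m _).mpr ⟨?_, ?_⟩
    · rw [hdecomp m (m + 1) hm (by omega)]
      simp only [Set.mem_iUnion, Set.mem_image, Set.mem_inter_iff]
      exact ⟨γ, ⟨hγD, hγΓ⟩, d, hdD, rfl⟩
    · rintro i hi ⟨σ, hσ, j, hjJ, hσj⟩
      rcases lt_or_eq_of_le hi with hilt | rfl
      · -- i < m : contradicts d ∈ J m
        have hγi : γ ∈ Γ (i + 1) := chain (i + 1) m (by omega) (by omega) hγΓ
        have hσj' : σ * j = γ * d := hσj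
        have hdmem : d ∈ Γs (i + 1) * J i := by
          refine ⟨γ⁻¹ * σ, (Γ (i + 1)).mul_mem ((Γ (i + 1)).inv_mem hγi) hσ, j, hjJ, ?_⟩
          show γ⁻¹ * σ * j = d
          rw [mul_assoc, hσj']
          group
        exact ((memJ k d).mp hdJ).2 i (by omega) hdmem
      · -- i = m : use uniqueness of the transversal
        have hσΓm : σ ∈ Γ m := chain m (m + 1) hm (by omega) hσ
        have hjD : j ∈ D m := hJsubD k hjJ
        -- j and d are both representatives of d at level m
        have hNm := hnorm m hm
        have hσj' : σ * j = γ * d := hσj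
        have hcore : d⁻¹ * j ∈ Γ m := by
          have hj : j = σ⁻¹ * (γ * d) := by rw [← hσj']; group
          have hmem : σ⁻¹ * γ ∈ Γ m := (Γ m).mul_mem ((Γ m).inv_mem hσΓm) hγΓ
          have := hNm.conj_mem (σ⁻¹ * γ) hmem d⁻¹
          rw [hj]
          convert this using 1
          group
        obtain ⟨e, -, he⟩ := htrans m hm d
        have h1 : j = e := he j ⟨hjD, hcore⟩
        have h2 : d = e := he d ⟨hdD, by rw [inv_mul_cancel]; exact (Γ m).one_mem⟩
        have hjd : j = d := h1.trans h2.symm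
        have hσγ : σ = γ := by
          rw [hjd] at hσj'
          exact mul_right_cancel hσj'
        -- γ ∈ Γ (m+1) ∩ D (m+1) forces γ = 1
        have hγΓm1 : γ ∈ Γ (m + 1) := hσγ ▸ hσ
        obtain ⟨e', -, he'⟩ := htrans (m + 1) (by omega) 1
        have h3 : γ = e' := he' γ ⟨hγD, by rw [inv_one, one_mul]; exact hγΓm1⟩
        have h4 : (1 : G) = e' := he' 1 ⟨hone (m + 1) (by omega), by
          rw [inv_one, one_mul]; exact (Γ (m + 1)).one_mem⟩
        exact hγ1 (h3.trans h4.symm)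
end

section
/- Let G be a countable group with a finite-index normal abelian subgroup G', R ⊆ G a finite set of coset representatives for G/G' with 1_G ∈ R, (Γ_i)_{i≥1} a strictly decreasing sequence of finite-index subgroups of G' (each of finite index in G) with ⋂_{i≥1} Γ_i = {1_G}, and (D_i)_{i≥1} finite subsets of G' such that for every i: D_i is a transversal for G'/Γ_i, 1_G ∈ D_i ⊆ D_{i+1}, G' = ⋃_{i≥1} D_i, and D_j = ⋃_{γ ∈ D_j ∩ Γ_i} γD_i for all i < j. Define J(0) = {1_G} and recursively J(m) = D_m \ ⋃_{i=0}^{m-1} Γ_{i+1}J(i) for m ≥ 1. Let m ≥ 2, Σ = {1,…,m} ∪ {β} with β ∉ {1,…,m}, (α_i)_{i≥1} the sequence in {1,…,m} with α_i ≡ i (mod m), and let η ∈ Σ^G be defined by η(g) = α_1 for g ∈ Γ_1, η(g) = β for g ∈ Γ_1(R \ {1_G}), and η(g) = α_{n+1} for g ∈ Γ_{n+1}J(n)R for each n ≥ 1. Then for every n ≥ 1, Per(η, Γ_n) = ⋃_{i=0}^{n-1} Γ_{i+1}J(i)R; furthermore Per(η, Γ_1, β) = Γ_1(R \ {1_G})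 and Per(η, Γ_1, α_1) = Γ_1. -/
open Set Pointwise

/-- `Per x S a = {g ∈ G : x (γ⁻¹ g) = a for all γ ∈ S}`. -/
def Per {G : Type*} [Group G] {A : Type*} (x : G → A) (S : Set G) (a : A) : Set G :=
  {g | ∀ γ ∈ S, x (γ⁻¹ * g) = a}

/-- `PerAll x S = ⋃_{a ∈ A} Per x S a`. -/
def PerAll {G : Type*} [Group G] {A : Type*} (x : G → A) (S : Set G) : Set G :=
  ⋃ a : A, Per x S a

/-!
Every `g ∈ G` is `δ d r` with `δ ∈ Γ_{j+1}`, `d ∈ J(j)`, `r ∈ R`, since the pieces `Γ_{i+1} J(i)`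
cover `G'`. For `i < n` the piece `Γ_{i+1} J(i) R` is invariant under `Γ_n ≤ Γ_{i+1}` and `η` is
constant on it (on `Γ_1` and on `Γ_1 (R \ {1})` separately when `i = 0`), so it lies in
`Per(η, Γ_n)`. If `j ≥ n`, the `Γ_n`-orbit of `d` meets both `J(n)` and `J(n+1)`: the
decomposition `D_j = ⋃ γ D_n` pulls `d` back into `J(n)`; translating by some
`γ₀ ∈ Γ_n \ Γ_{n+1}` moves `d` out of `Γ_{n+1} J(n)` (as `D_n` is a transversal of `G' / Γ_n`
and `G'` is abelian) and out of the earlier pieces, hence into a later one, which is pulled back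
into `J(n+1)`. As `α_{n+1} ≠ α_{n+2}`, `η` is then not constant on `Γ_n g`.
-/

section Periodic

variable {G A : Type*} [Group G] {x : G → A} {H K : Subgroup G} {S T : Set G} {a : A}

theorem Per_subset_fiber : Per x H a ⊆ {g | x g = a} := fun g hg => by
  simpa using hg 1 H.one_mem

theorem Per_subset_PerAll : Per x S a ⊆ PerAll x S :=
  subset_iUnion (Per x S) a

theorem subset_Per_of_mul_mem (hS : ∀ γ ∈ H, ∀ g ∈ S, γ * g ∈ S) (hx : ∀ g ∈ S, x g = a) :
    S ⊆ Per x H a :=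
  fun g hg _ hγ => hx _ (hS _ (H.inv_mem hγ) g hg)

theorem Per_subset_of_subset_union (h : Per x H a ⊆ S ∪ T) (hS : ∀ g ∈ S, x g ≠ a) :
    Per x H a ⊆ T :=
  fun g hg => (h hg).resolve_left fun hgS => hS g hgS (Per_subset_fiber hg)

theorem notMem_PerAll_of_ne {g γ₁ γ₂ : G} (h₁ : γ₁ ∈ H) (h₂ : γ₂ ∈ H)
    (hne : x (γ₁ * g) ≠ x (γ₂ * g)) : g ∉ PerAll x H := by
  rintro ⟨-, ⟨a, rfl⟩, hg⟩
  have e₁ := hg γ₁⁻¹ (H.inv_mem h₁)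
  have e₂ := hg γ₂⁻¹ (H.inv_mem h₂)
  rw [inv_inv] at e₁ e₂
  exact hne (e₁.trans e₂.symm)

theorem mul_mem_subgroup_mul {γ g : G} (hγ : γ ∈ H) (hg : g ∈ (H : Set G) * S) :
    γ * g ∈ (H : Set G) * S := by
  obtain ⟨h, hh, s, hs, rfl⟩ := hg
  exact ⟨γ * h, H.mul_mem hγ hh, s, hs, mul_assoc _ _ _⟩

theorem subgroup_mul_subset_Per (hKH : K ≤ H) (hx : ∀ g ∈ (H : Set G) * S, x g = a) :
    (H : Set G) * S ⊆ Per x K a :=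
  subset_Per_of_mul_mem (fun _ hγ _ hg => mul_mem_subgroup_mul (hKH hγ) hg) hx

theorem subgroup_subset_Per (hKH : K ≤ H) (hx : ∀ g ∈ H, x g = a) : (H : Set G) ⊆ Per x K a :=
  subset_Per_of_mul_mem (fun _ hγ _ hg => H.mul_mem (hKH hγ) hg) hx

theorem subgroup_mul_subset_union (R : Set G) :
    (H : Set G) * R ⊆ H ∪ (H : Set G) * (R \ {1}) := by
  rintro _ ⟨γ, hγ, r, hr, rfl⟩
  by_cases hr1 : r = 1
  · subst hr1
    exact Or.inl (by simpa using hγ)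
  · exact Or.inr ⟨γ, hγ, r, ⟨hr, hr1⟩, rfl⟩

end Periodic

section Transversal

variable {G : Type*} [Group G]

theorem exists_mul_eq_of_transversal {N : Subgroup G} (hN : N.Normal) {R : Set G}
    (hR : ∀ g : G, ∃ r, r ∈ R ∧ g⁻¹ * r ∈ N) (g : G) : ∃ x ∈ N, ∃ r ∈ R, x * r = g := by
  obtain ⟨r, hr, hgr⟩ := hR g
  refine ⟨g * r⁻¹, ?_, r, hr, inv_mul_cancel_right g r⟩
  simpa using N.inv_mem (hN.mem_comm hgr)

/-- As `A` is abelian, `d⁻¹ * (k * d) = k ∈ K`, so `d` and `k * d` lie in the same coset. -/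
theorem eq_one_of_mul_mem_transversal {A K : Subgroup G} (hab : ∀ x ∈ A, ∀ y ∈ A, x * y = y * x)
    (hKA : K ≤ A) {T : Set G} (hTA : T ⊆ A) (hT : ∀ g ∈ A, ∃! d, d ∈ T ∧ g⁻¹ * d ∈ K)
    {k d : G} (hk : k ∈ K) (hd : d ∈ T) (hkd : k * d ∈ T) : k = 1 := by
  have hconj : d⁻¹ * (k * d) = k := by rw [hab k (hKA hk) d (hTA hd), inv_mul_cancel_left]
  have hdk : d = k * d :=
    (hT d (hTA hd)).unique ⟨hd, by simp⟩ ⟨hkd, by rw [hconj]; exact hk⟩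
  exact right_eq_mul.mp hdk

end Transversal

section Jset

variable {G : Type*} [Group G]

theorem Jset_zero (Γ D : ℕ → Set G) : Jset Γ D 0 = {1} := by
  rw [Jset]

theorem Jset_succ (Γ D : ℕ → Set G) (m : ℕ) :
    Jset Γ D (m + 1) = D (m + 1) \ ⋃ i : Fin (m + 1), Γ (i.val + 1) * Jset Γ D i.val := by
  rw [Jset]

theorem Jset_subset {Γ D : ℕ → Set G} {n : ℕ} (hn : 1 ≤ n) : Jset Γ D n ⊆ D n := by
  obtain ⟨n, rfl⟩ : ∃ n', n = n' + 1 := ⟨n - 1, by omega⟩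
  rw [Jset_succ]
  exact sdiff_subset

theorem Jset_subset_subgroup {Γ D : ℕ → Set G} {H : Subgroup G} (hD : ∀ i, 1 ≤ i → D i ⊆ H)
    (n : ℕ) : Jset Γ D n ⊆ H := by
  rcases n.eq_zero_or_pos with rfl | hn
  · simp [Jset_zero]
  · exact (Jset_subset hn).trans (hD n hn)

theorem notMem_mul_Jset_of_lt {Γ D : ℕ → Set G} {i l : ℕ} (hil : i < l) {g : G}
    (hg : g ∈ Jset Γ D l) : g ∉ Γ (i + 1) * Jset Γ D i := by
  obtain ⟨l, rfl⟩ : ∃ l', l = l' + 1 := ⟨l - 1, by omega⟩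
  rw [Jset_succ] at hg
  exact fun h => hg.2 (mem_iUnion.2 ⟨⟨i, hil⟩, h⟩)

theorem exists_mem_mul_Jset {Γ D : ℕ → Set G} (hΓ : ∀ i, (1 : G) ∈ Γ i) {g : G}
    (hg : g ∈ ⋃ i, ⋃ (_ : 1 ≤ i), D i) : ∃ i, g ∈ Γ (i + 1) * Jset Γ D i := by
  obtain ⟨k, hk, hgk⟩ := mem_iUnion₂.1 hg
  obtain ⟨k, rfl⟩ : ∃ k', k = k' + 1 := ⟨k - 1, by omega⟩
  by_cases h : g ∈ ⋃ i : Fin (k + 1), Γ (i.val + 1) * Jset Γ D i.val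
  · obtain ⟨i, hi⟩ := mem_iUnion.1 h
    exact ⟨i, hi⟩
  · exact ⟨k + 1, 1, hΓ _, g, by rw [Jset_succ]; exact ⟨hgk, h⟩, one_mul g⟩

variable {Γ : ℕ → Subgroup G} {D : ℕ → Set G}

local notation "J" => Jset (fun k => ((Γ k : Subgroup G) : Set G)) D

theorem exists_mul_mem_Jset_of_le (hanti : AntitoneOn Γ (Ici 1))
    (hdecomp : ∀ i j, 1 ≤ i → i < j →
      D j = ⋃ γ ∈ D j ∩ (Γ i : Set G), (fun d => γ * d) '' D i)
    {k l : ℕ} (hk : 1 ≤ k) (hkl : k ≤ l) {e : G} (he : e ∈ J l) : ∃ γ ∈ Γ k, γ * e ∈ J k := by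
  obtain rfl | hlt := hkl.eq_or_lt
  · exact ⟨1, (Γ k).one_mem, by simpa using he⟩
  have heD := Jset_subset (by omega) he
  rw [hdecomp k l hk hlt] at heD
  simp only [mem_iUnion, mem_image] at heD
  obtain ⟨γ, ⟨-, hγ⟩, e', he', rfl⟩ := heD
  refine ⟨γ⁻¹, (Γ k).inv_mem hγ, ?_⟩
  rw [inv_mul_cancel_left]
  obtain ⟨k, rfl⟩ : ∃ k', k = k' + 1 := ⟨k - 1, by omega⟩
  rw [Jset_succ]
  refine ⟨he', fun hearlier => ?_⟩
  obtain ⟨⟨i, hi⟩, hmem⟩ := mem_iUnion.1 hearlier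
  have hγi : γ ∈ Γ (i + 1) := hanti (by simp) hk (by omega) hγ
  exact notMem_mul_Jset_of_lt (by omega) he (mul_mem_subgroup_mul hγi hmem)

theorem mem_of_mul_mem_mul_Jset {Gp : Subgroup G} (hab : ∀ x ∈ Gp, ∀ y ∈ Gp, x * y = y * x)
    {n : ℕ} (hn : 1 ≤ n) (hΓn : Γ n ≤ Gp) (hΓsucc : Γ (n + 1) ≤ Γ n) (hDn : D n ⊆ Gp)
    (htrans : ∀ g ∈ Gp, ∃! d, d ∈ D n ∧ g⁻¹ * d ∈ Γ n)
    {γ d : G} (hγ : γ ∈ Γ n) (hd : d ∈ J n) (hγd : γ * d ∈ (Γ (n + 1) : Set G) * J n) :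
    γ ∈ Γ (n + 1) := by
  obtain ⟨δ, hδ, e, he, hδe⟩ := hγd
  have hδγ : δ⁻¹ * γ = 1 := by
    refine eq_one_of_mul_mem_transversal hab hΓn hDn htrans
      ((Γ n).mul_mem ((Γ n).inv_mem (hΓsucc hδ)) hγ) (Jset_subset hn hd) ?_
    rw [mul_assoc, ← hδe, inv_mul_cancel_left]
    exact Jset_subset hn he
  rwa [← inv_mul_eq_one.mp hδγ]

theorem exists_mul_mem_Jset_succ {Gp : Subgroup G} (hab : ∀ x ∈ Gp, ∀ y ∈ Gp, x * y = y * x)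
    (hΓle : ∀ i, 1 ≤ i → Γ i ≤ Gp) (hdec : ∀ i, 1 ≤ i → Γ (i + 1) < Γ i)
    (hDsub : ∀ i, 1 ≤ i → D i ⊆ (Gp : Set G))
    (htrans : ∀ i, 1 ≤ i → ∀ g ∈ Gp, ∃! d, d ∈ D i ∧ g⁻¹ * d ∈ Γ i)
    (hdecomp : ∀ i j, 1 ≤ i → i < j →
      D j = ⋃ γ ∈ D j ∩ (Γ i : Set G), (fun d => γ * d) '' D i)
    (hcov : ∀ g ∈ Gp, ∃ i, g ∈ (Γ (i + 1) : Set G) * J i)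
    {n j : ℕ} (hn : 1 ≤ n) (hnj : n ≤ j) {d : G} (hd : d ∈ J j) :
    ∃ γ ∈ Γ n, γ * d ∈ J (n + 1) := by
  have hanti : AntitoneOn Γ (Ici 1) := antitoneOn_nat_Ici_of_succ_le fun i hi => (hdec i hi).le
  obtain rfl | hlt := hnj.eq_or_lt
  swap
  · obtain ⟨γ, hγ, h⟩ := exists_mul_mem_Jset_of_le hanti hdecomp (by omega) hlt hd
    exact ⟨γ, (hdec n hn).le hγ, h⟩
  obtain ⟨γ₀, hγ₀, hγ₀'⟩ := SetLike.exists_of_lt (hdec n hn)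
  obtain ⟨l, δ, hδ, e, he, hδe⟩ :=
    hcov _ (Gp.mul_mem (hΓle n hn hγ₀) (Jset_subset_subgroup hDsub n hd))
  obtain hln | rfl | hnl := lt_trichotomy l n
  · refine absurd ⟨γ₀⁻¹ * δ, ?_, e, he, ?_⟩ (notMem_mul_Jset_of_lt hln hd)
    · exact (Γ (l + 1)).mul_mem ((Γ (l + 1)).inv_mem (hanti (by simp) hn (by omega) hγ₀)) hδ
    · simp [mul_assoc, hδe]
  · exact absurd (mem_of_mul_mem_mul_Jset hab hn (hΓle l hn) (hdec l hn).le (hDsub l hn)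
      (htrans l hn) hγ₀ hd ⟨δ, hδ, e, he, hδe⟩) hγ₀'
  · obtain ⟨γ', hγ', h⟩ := exists_mul_mem_Jset_of_le hanti hdecomp (by omega) hnl he
    refine ⟨γ' * δ⁻¹ * γ₀, ?_, ?_⟩
    · exact (Γ n).mul_mem ((Γ n).mul_mem ((hdec n hn).le hγ')
        ((Γ n).inv_mem (hanti hn (by simp) (by omega) hδ))) hγ₀
    · rwa [mul_assoc, mul_assoc, ← hδe, inv_mul_cancel_left]

end Jset

section Toeplitz

variable {G A : Type*} [Group G] {η : G → A} {R : Set G} {Γ : ℕ → Subgroup G} {J : ℕ → Set G}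

theorem PerAll_subset_iUnion {N : Subgroup G} {c : ℕ → A}
    (hNR : ∀ g, ∃ x ∈ N, ∃ r ∈ R, x * r = g)
    (hcov : ∀ x ∈ N, ∃ i, x ∈ (Γ (i + 1) : Set G) * J i)
    (hanti : AntitoneOn Γ (Ici 1))
    (horbit : ∀ n j, 1 ≤ n → n ≤ j → ∀ d ∈ J j, ∃ γ ∈ Γ n, γ * d ∈ J n)
    (horbit_succ : ∀ n j, 1 ≤ n → n ≤ j → ∀ d ∈ J j, ∃ γ ∈ Γ n, γ * d ∈ J (n + 1))
    (hη : ∀ k, 1 ≤ k → ∀ g ∈ (Γ (k + 1) : Set G) * J k * R, η g = c k)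
    (hc : ∀ k, 1 ≤ k → c k ≠ c (k + 1)) {n : ℕ} (hn : 1 ≤ n) :
    PerAll η (Γ n) ⊆ ⋃ i ∈ Finset.range n, (Γ (i + 1) : Set G) * J i * R := by
  intro g hg
  obtain ⟨x, hx, r, hr, rfl⟩ := hNR g
  obtain ⟨j, δ, hδ, d, hd, rfl⟩ := hcov x hx
  by_cases hjn : j < n
  · exact mem_iUnion₂.2 ⟨j, Finset.mem_range.2 hjn, mul_mem_mul (mul_mem_mul hδ hd) hr⟩
  push Not at hjn
  have hδn : δ ∈ Γ n := hanti hn (by simp) (by omega) hδ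
  have hηJ : ∀ k, 1 ≤ k → ∀ e ∈ J k, η (e * r) = c k := fun k hk e he =>
    hη k hk _ (mul_mem_mul (by simpa using mul_mem_mul (Γ (k + 1)).one_mem he) hr)
  obtain ⟨γ₁, hγ₁, h₁⟩ := horbit n j hn hjn d hd
  obtain ⟨γ₂, hγ₂, h₂⟩ := horbit_succ n j hn hjn d hd
  refine absurd hg (notMem_PerAll_of_ne ((Γ n).mul_mem hγ₁ ((Γ n).inv_mem hδn))
    ((Γ n).mul_mem hγ₂ ((Γ n).inv_mem hδn)) ?_)
  have hcancel : ∀ γ, γ * δ⁻¹ * (δ * d * r) = γ * d * r := fun γ => by group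
  rw [hcancel, hcancel, hηJ n hn _ h₁, hηJ (n + 1) (by omega) _ h₂]
  exact hc n hn

theorem iUnion_subset_PerAll {a₁ b : A} {c : ℕ → A} (hanti : AntitoneOn Γ (Ici 1))
    (hJ₀ : J 0 = {1}) (hη₁ : ∀ g ∈ (Γ 1 : Set G), η g = a₁)
    (hηβ : ∀ g ∈ (Γ 1 : Set G) * (R \ {1}), η g = b)
    (hη : ∀ k, 1 ≤ k → ∀ g ∈ (Γ (k + 1) : Set G) * J k * R, η g = c k) {n : ℕ} (hn : 1 ≤ n) :
    ⋃ i ∈ Finset.range n, (Γ (i + 1) : Set G) * J i * R ⊆ PerAll η (Γ n) := by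
  simp only [iUnion_subset_iff, Finset.mem_range]
  intro i hi
  have hle : Γ n ≤ Γ (i + 1) := hanti (by simp) hn (by omega)
  rcases i with _ | i
  · rw [hJ₀, singleton_one, mul_one]
    refine (subgroup_mul_subset_union R).trans (union_subset ?_ ?_)
    · exact (subgroup_subset_Per hle hη₁).trans Per_subset_PerAll
    · exact (subgroup_mul_subset_Per hle hηβ).trans Per_subset_PerAll
  · rw [mul_assoc]
    refine (subgroup_mul_subset_Per (a := c (i + 1)) hle fun g hg => ?_).trans Per_subset_PerAll
    exact hη (i + 1) (by omega) g (by rwa [mul_assoc])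

end Toeplitz

theorem ne_succ_of_add_one_mod_eq {m : ℕ} (hm : 2 ≤ m) {α : ℕ → Fin m}
    (hα : ∀ i, 1 ≤ i → ((α i : ℕ) + 1) % m = i % m) {i : ℕ} (hi : 1 ≤ i) : α i ≠ α (i + 1) := by
  intro h
  have hmod := hα (i + 1) (by omega)
  rw [← h, hα i hi] at hmod
  have := Nat.sub_mod_eq_zero_of_mod_eq hmod.symm
  rw [Nat.add_sub_cancel_left, Nat.mod_eq_of_lt (by omega)] at this
  exact one_ne_zero this

theorem per_eta_union_formula_general
    {G : Type*} [Group G]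
    (Gp : Subgroup G) (hN : Gp.Normal)
    (hab : ∀ x ∈ Gp, ∀ y ∈ Gp, x * y = y * x)
    (R : Set G)
    (hRtrans : ∀ g : G, ∃! r, r ∈ R ∧ g⁻¹ * r ∈ Gp)
    (Γ : ℕ → Subgroup G)
    (hΓle : ∀ i, 1 ≤ i → Γ i ≤ Gp)
    (hdec : ∀ i, 1 ≤ i → Γ (i + 1) < Γ i)
    (D : ℕ → Set G)
    (hDsub : ∀ i, 1 ≤ i → D i ⊆ (Gp : Set G))
    (htrans : ∀ i, 1 ≤ i → ∀ g ∈ Gp, ∃! d, d ∈ D i ∧ g⁻¹ * d ∈ Γ i)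
    (hcover : (Gp : Set G) = ⋃ i, ⋃ (_ : 1 ≤ i), D i)
    (hdecomp : ∀ i j, 1 ≤ i → i < j →
      D j = ⋃ γ ∈ D j ∩ (Γ i : Set G), (fun d => γ * d) '' D i)
    (m : ℕ) (hm : 2 ≤ m)
    (αseq : ℕ → Fin m) (hα : ∀ i, 1 ≤ i → ((αseq i : ℕ) + 1) % m = i % m)
    (η : G → Option (Fin m))
    (hη1 : ∀ g ∈ (Γ 1 : Set G), η g = some (αseq 1))
    (hηβ : ∀ g ∈ (Γ 1 : Set G) * (R \ {1}), η g = none)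
    (hηn : ∀ n, 1 ≤ n → ∀ g ∈ (Γ (n + 1) : Set G)
        * Jset (fun k => (Γ k : Set G)) D n * R,
      η g = some (αseq (n + 1))) :
    (∀ n, 1 ≤ n → PerAll η (Γ n : Set G) =
      ⋃ i ∈ Finset.range n,
        (Γ (i + 1) : Set G) * Jset (fun k => (Γ k : Set G)) D i * R) ∧
    Per η (Γ 1 : Set G) none = (Γ 1 : Set G) * (R \ {1}) ∧
    Per η (Γ 1 : Set G) (some (αseq 1)) = (Γ 1 : Set G) := by
  have hanti : AntitoneOn Γ (Ici 1) := antitoneOn_nat_Ici_of_succ_le fun i hi => (hdec i hi).le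
  have hcov : ∀ g ∈ Gp, ∃ i, g ∈ (Γ (i + 1) : Set G) * Jset (fun k => (Γ k : Set G)) D i :=
    fun g hg => exists_mem_mul_Jset (fun i => (Γ i).one_mem) (hcover ▸ hg)
  have hPerAll : ∀ n, 1 ≤ n → PerAll η (Γ n : Set G) =
      ⋃ i ∈ Finset.range n, (Γ (i + 1) : Set G) * Jset (fun k => (Γ k : Set G)) D i * R := by
    intro n hn
    refine (PerAll_subset_iUnion (exists_mul_eq_of_transversal hN fun g => (hRtrans g).exists)
      hcov hanti ?_ ?_ hηn ?_ hn).antisymm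
      (iUnion_subset_PerAll hanti (Jset_zero _ _) hη1 hηβ hηn hn)
    · exact fun _ _ hk hkj _ hd => exists_mul_mem_Jset_of_le hanti hdecomp hk hkj hd
    · exact fun _ _ hk hkj _ hd =>
        exists_mul_mem_Jset_succ hab hΓle hdec hDsub htrans hdecomp hcov hk hkj hd
    · intro k hk
      simpa using ne_succ_of_add_one_mod_eq hm hα (by omega : 1 ≤ k + 1)
  have hPer₁ : ∀ a, Per η (Γ 1 : Set G) a ⊆ (Γ 1 : Set G) ∪ (Γ 1 : Set G) * (R \ {1}) :=
    fun a => Per_subset_PerAll.trans <| (hPerAll 1 le_rfl).subset.trans <| by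
      simpa [Jset_zero] using subgroup_mul_subset_union R
  refine ⟨hPerAll, ?_, ?_⟩
  · exact (Per_subset_of_subset_union (hPer₁ none) fun g hg => by simp [hη1 g hg]).antisymm
      (subgroup_mul_subset_Per le_rfl hηβ)
  · exact (Per_subset_of_subset_union ((hPer₁ _).trans (union_comm _ _).subset)
      fun g hg => by simp [hηβ g hg]).antisymm (subgroup_subset_Per le_rfl hη1)

/-- In the virtually abelian Toeplitz construction, for every
`n ≥ 1` one has `Per(η,Γₙ) = ⋃_{i=0}^{n-1} Γ_{i+1} J(i) R`; furthermore
`Per(η,Γ₁,β) = Γ₁(R \\ {1})` and `Per(η,Γ₁,α₁) = Γ₁`. -/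
theorem per_eta_union_formula
    {G : Type*} [Group G] [Countable G]
    (Gp : Subgroup G) (hN : Gp.Normal) (hFI : Gp.FiniteIndex)
    (hab : ∀ x ∈ Gp, ∀ y ∈ Gp, x * y = y * x)
    (R : Set G) (hRfin : R.Finite) (hR1 : (1 : G) ∈ R)
    (hRtrans : ∀ g : G, ∃! r, r ∈ R ∧ g⁻¹ * r ∈ Gp)
    (Γ : ℕ → Subgroup G)
    (hΓle : ∀ i, 1 ≤ i → Γ i ≤ Gp)
    (hdec : ∀ i, 1 ≤ i → Γ (i + 1) < Γ i)
    (hfin : ∀ i, 1 ≤ i → (Γ i).FiniteIndex)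
    (hcap : (⋂ i, ⋂ (_ : 1 ≤ i), (Γ i : Set G)) = {1})
    (D : ℕ → Set G)
    (hDfin : ∀ i, 1 ≤ i → (D i).Finite)
    (hDsub : ∀ i, 1 ≤ i → D i ⊆ (Gp : Set G))
    (htrans : ∀ i, 1 ≤ i → ∀ g ∈ Gp, ∃! d, d ∈ D i ∧ g⁻¹ * d ∈ Γ i)
    (hone : ∀ i, 1 ≤ i → (1 : G) ∈ D i)
    (hmono : ∀ i, 1 ≤ i → D i ⊆ D (i + 1))
    (hcover : (Gp : Set G) = ⋃ i, ⋃ (_ : 1 ≤ i), D i)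
    (hdecomp : ∀ i j, 1 ≤ i → i < j →
      D j = ⋃ γ ∈ D j ∩ (Γ i : Set G), (fun d => γ * d) '' D i)
    (m : ℕ) (hm : 2 ≤ m)
    (αseq : ℕ → Fin m) (hα : ∀ i, 1 ≤ i → ((αseq i : ℕ) + 1) % m = i % m)
    (η : G → Option (Fin m))
    (hη1 : ∀ g ∈ (Γ 1 : Set G), η g = some (αseq 1))
    (hηβ : ∀ g ∈ (Γ 1 : Set G) * (R \ {1}), η g = none)
    (hηn : ∀ n, 1 ≤ n → ∀ g ∈ (Γ (n + 1) : Set G)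
        * Jset (fun k => (Γ k : Set G)) D n * R,
      η g = some (αseq (n + 1))) :
    (∀ n, 1 ≤ n → PerAll η (Γ n : Set G) =
      ⋃ i ∈ Finset.range n,
        (Γ (i + 1) : Set G) * Jset (fun k => (Γ k : Set G)) D i * R) ∧
    Per η (Γ 1 : Set G) none = (Γ 1 : Set G) * (R \ {1}) ∧
    Per η (Γ 1 : Set G) (some (αseq 1)) = (Γ 1 : Set G) :=
  per_eta_union_formula_general Gp hN hab R hRtrans Γ hΓle hdec D hDsub htrans hcover hdecomp m hm
    αseq hα η hη1 hηβ hηn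
end
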